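/- arXiv:2009.03643 — 6 statements merged into one kernel-verified Lean document; each statement's English description precedes it below -/
import Mathlib

section
/- For every f ∈ W₀¹ and every x ≥ 0, there exist unique functions g ∈ C⁺ and h ∈ C⁺ such that: (i) g(t) = x + f(t) + h(t) for all t ≥ 0; (ii) h(0) = 0 and t ↦ h(t) is nondecreasing; (iii) the Stieltjes measure dh is carried by the set {t : g(t) = 0}, i.e. ∫₀ᵗ 1_{{0}}(g(s)) dh(s) = h(t) for all t ≥ 0. -/
open MeasureTheory Set

/-- The Lebesgue–Stieltjes measure `dh` of `h` is carried by the zero set of `g`: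
there is a measure `μ` on `[0,∞)` with `μ((a,b]) = h(b) − h(a)` for `0 ≤ a ≤ b`
(i.e. `μ = dh`) such that `∫₀ᵗ 1_{{0}}(g(s)) dh(s) = h(t)` for all `t ≥ 0`. -/
def StieltjesCarriedOnZeros (g h : ℝ → ℝ) : Prop :=
  ∃ μ : Measure ℝ,
    (∀ a b : ℝ, 0 ≤ a → a ≤ b → μ (Ioc a b) = ENNReal.ofReal (h b - h a)) ∧
    ∀ t : ℝ, 0 ≤ t →
      ∫⁻ s in Ioc (0 : ℝ) t, (Set.indicator {(0 : ℝ)} (fun _ => (1 : ENNReal)) (g s)) ∂μ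
        = ENNReal.ofReal (h t)

/-!
Write `y = x + f`. The regulator is `h(t) = sup_{0 ≤ s ≤ t} max (-y s) 0`, the least nonnegative
nondecreasing function with `y + h ≥ 0`. Where `g = y + h > 0` we have `-y < h`, so by continuity
the supremum does not grow nearby: `h` is locally constant there and `dh` does not charge
`{g ≠ 0}`. For another solution `(g₁, h₁)`, minimality gives `h ≤ h₁`; conversely, if `p` is the
last zero of `g₁` in `[0, t]` (or `p = 0`), then `dh₁` does not charge `(p, t]`, so
`h₁ t = h₁ p = -y p ≤ h t`.
-/

open Filter Topology

section RunningSup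

variable {G : ℝ → ℝ} {s t : ℝ}

noncomputable def runningSup (G : ℝ → ℝ) (t : ℝ) : ℝ := sSup (G '' Icc 0 t)

lemma le_runningSup (hG : Continuous G) (hs : s ∈ Icc 0 t) : G s ≤ runningSup G t :=
  le_csSup (isCompact_Icc.image hG).bddAbove (mem_image_of_mem G hs)

lemma runningSup_le {c : ℝ} (ht : 0 ≤ t) (hc : ∀ s ∈ Icc 0 t, G s ≤ c) : runningSup G t ≤ c :=
  csSup_le ((nonempty_Icc.2 ht).image G) (forall_mem_image.2 hc)

lemma runningSup_of_neg (ht : t < 0) : runningSup G t = 0 := by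
  simp [runningSup, Icc_eq_empty_of_lt ht]

lemma monotone_runningSup (hG : Continuous G) (hG0 : 0 ≤ G 0) : Monotone (runningSup G) := by
  intro s t hst
  rcases lt_or_ge s 0 with hs | hs
  · rcases lt_or_ge t 0 with ht | ht
    · rw [runningSup_of_neg hs, runningSup_of_neg ht]
    · rw [runningSup_of_neg hs]
      exact hG0.trans (le_runningSup hG ⟨le_rfl, ht⟩)
  · exact runningSup_le hs fun u hu => le_runningSup hG ⟨hu.1, hu.2.trans hst⟩

/-- Rescaling `[0, t]` to the fixed compact `[0, 1]` brings continuity within reach of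
`IsCompact.continuous_sSup`; `G 0 = 0` matches the junk value `sSup ∅ = 0` for `t < 0`. -/
lemma runningSup_eq_sSup_image_Icc_zero_one (hG0 : G 0 = 0) (t : ℝ) :
    runningSup G t = sSup ((fun u => G (max t 0 * u)) '' Icc 0 1) := by
  rcases lt_or_ge t 0 with ht | ht
  · simp [runningSup_of_neg ht, max_eq_right ht.le, hG0,
      (nonempty_Icc.2 zero_le_one).image_const]
  · have hIcc : Icc 0 t = (t * ·) '' Icc 0 1 := by
      rw [image_mul_left_Icc ht zero_le_one, mul_zero, mul_one]
    rw [runningSup, hIcc, image_image, max_eq_left ht]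

lemma continuous_runningSup (hG : Continuous G) (hG0 : G 0 = 0) :
    Continuous (runningSup G) := by
  rw [funext (runningSup_eq_sSup_image_Icc_zero_one hG0)]
  exact isCompact_Icc.continuous_sSup (f := fun t u => G (max t 0 * u)) (by fun_prop)

end RunningSup

section Regulator

variable {y : ℝ → ℝ} {a b s t : ℝ}

noncomputable def skorohodRegulator (y : ℝ → ℝ) : ℝ → ℝ := runningSup fun s => max (-y s) 0

lemma skorohodRegulator_nonneg (y : ℝ → ℝ) (t : ℝ) : 0 ≤ skorohodRegulator y t :=
  Real.sSup_nonneg (forall_mem_image.2 fun _ _ => le_max_right _ _)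

lemma skorohodRegulator_zero (hy0 : 0 ≤ y 0) : skorohodRegulator y 0 = 0 := by
  simp [skorohodRegulator, runningSup, hy0]

lemma neg_le_skorohodRegulator (hy : Continuous y) (hs : s ∈ Icc 0 t) :
    -y s ≤ skorohodRegulator y t :=
  (le_max_left _ _).trans (le_runningSup (G := fun s => max (-y s) 0) (by fun_prop) hs)

lemma add_skorohodRegulator_nonneg (hy : Continuous y) (ht : 0 ≤ t) :
    0 ≤ y t + skorohodRegulator y t := by
  linarith [neg_le_skorohodRegulator hy ⟨ht, le_rfl⟩]

lemma monotone_skorohodRegulator (hy : Continuous y) : Monotone (skorohodRegulator y) :=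
  monotone_runningSup (by fun_prop) (le_max_right _ _)

lemma continuous_skorohodRegulator (hy : Continuous y) (hy0 : 0 ≤ y 0) :
    Continuous (skorohodRegulator y) :=
  continuous_runningSup (by fun_prop) (max_eq_right (neg_nonpos.2 hy0))

lemma skorohodRegulator_le {h : ℝ → ℝ} (hmono : MonotoneOn h (Ici 0)) (ht : 0 ≤ t)
    (hht : 0 ≤ h t) (hyh : ∀ s ∈ Icc 0 t, 0 ≤ y s + h s) : skorohodRegulator y t ≤ h t :=
  runningSup_le ht fun s hs => max_le (by linarith [hyh s hs, hmono hs.1 ht hs.2]) hht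

lemma skorohodRegulator_le_of_forall_Icc (hy : Continuous y) (ha : 0 ≤ a) (hab : a ≤ b)
    (hle : ∀ v ∈ Icc a b, -y v ≤ skorohodRegulator y a) :
    skorohodRegulator y b ≤ skorohodRegulator y a := by
  refine runningSup_le (ha.trans hab) fun v hv => ?_
  rcases le_total v a with hva | hav
  · exact le_runningSup (G := fun s => max (-y s) 0) (by fun_prop) ⟨hv.1, hva⟩
  · exact max_le (hle v ⟨hav, hv.2⟩) (skorohodRegulator_nonneg y a)

lemma skorohodRegulator_eventually_eq (hy : Continuous y) (hy0 : 0 ≤ y 0) (hs : 0 < s)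
    (hlt : -y s < skorohodRegulator y s) :
    ∀ᶠ v in 𝓝 s, skorohodRegulator y v = skorohodRegulator y s := by
  set h := skorohodRegulator y
  obtain ⟨c, hyc, hch⟩ := exists_between hlt
  have hev : ∀ᶠ v in 𝓝 s, 0 < v ∧ -y v < c ∧ c < h v :=
    (lt_mem_nhds hs).and ((hy.neg.continuousAt.eventually_lt continuousAt_const hyc).and
      (continuousAt_const.eventually_lt (continuous_skorohodRegulator hy hy0).continuousAt hch))
  obtain ⟨l, r, ⟨hls, hsr⟩, hsub⟩ := mem_nhds_iff_exists_Ioo_subset.1 hev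
  obtain ⟨a, hla, has⟩ := exists_between hls
  have ha := hsub ⟨hla, has.trans hsr⟩
  have hflat : ∀ v, a ≤ v → v < r → h v = h a := fun v hav hvr =>
    le_antisymm
      (skorohodRegulator_le_of_forall_Icc hy ha.1.le hav fun w hw =>
        (hsub ⟨hla.trans_le hw.1, hw.2.trans_lt hvr⟩).2.1.le.trans ha.2.2.le)
      (monotone_skorohodRegulator hy hav)
  filter_upwards [Ioo_mem_nhds has hsr] with v hv
  rw [hflat v hv.1.le hv.2, hflat s has.le hsr]

end Regulator

lemma StieltjesFunction.measure_eq_zero_of_eventually_eq (F : StieltjesFunction ℝ) {S : Set ℝ}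
    (hS : ∀ s ∈ S, ∀ᶠ u in 𝓝 s, F u = F s) : F.measure S = 0 := by
  refine measure_null_of_locally_null S fun s hs => ?_
  obtain ⟨l, r, ⟨hls, hsr⟩, hsub⟩ := mem_nhds_iff_exists_Ioo_subset.1 (hS s hs)
  obtain ⟨a, hla, has⟩ := exists_between hls
  obtain ⟨b, hsb, hbr⟩ := exists_between hsr
  refine ⟨Ioo a b, mem_nhdsWithin_of_mem_nhds (Ioo_mem_nhds has hsb),
    measure_mono_null Ioo_subset_Ioc_self ?_⟩
  have ha : F a = F s := hsub ⟨hla, has.trans hsr⟩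
  have hb : F b = F s := hsub ⟨hls.trans hsb, hbr⟩
  rw [F.measure_Ioc, ha, hb, sub_self, ENNReal.ofReal_zero]

lemma stieltjesCarriedOnZeros_of_measure_eq_zero (F : StieltjesFunction ℝ) {g : ℝ → ℝ}
    (hg : MeasurableSet (g ⁻¹' {0})) (hF0 : F 0 = 0)
    (hnull : F.measure {s | 0 < s ∧ g s ≠ 0} = 0) : StieltjesCarriedOnZeros g F := by
  refine ⟨F.measure, fun a b _ _ => F.measure_Ioc a b, fun t _ => ?_⟩
  have hind : (fun s => ({0} : Set ℝ).indicator (fun _ => (1 : ENNReal)) (g s))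
      = (g ⁻¹' {0}).indicator 1 := by
    ext s
    by_cases hgs : g s = 0 <;> simp [hgs]
  have hdiff : F.measure (Ioc 0 t \ g ⁻¹' {0}) = 0 :=
    measure_mono_null (fun s hs => (⟨hs.1.1, hs.2⟩ : 0 < s ∧ g s ≠ 0)) hnull
  rw [hind, lintegral_indicator_one hg, Measure.restrict_apply hg, inter_comm,
    measure_inter_conull' hdiff, F.measure_Ioc, hF0, sub_zero]

lemma stieltjesCarriedOnZeros_skorohodRegulator {y : ℝ → ℝ} (hy : Continuous y)
    (hy0 : 0 ≤ y 0) :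
    StieltjesCarriedOnZeros (fun t => y t + skorohodRegulator y t) (skorohodRegulator y) := by
  have hcont := continuous_skorohodRegulator hy hy0
  let F : StieltjesFunction ℝ :=
    ⟨skorohodRegulator y, monotone_skorohodRegulator hy, fun _ => hcont.continuousWithinAt⟩
  refine stieltjesCarriedOnZeros_of_measure_eq_zero F
    (isClosed_singleton.preimage (hy.add hcont)).measurableSet (skorohodRegulator_zero hy0)
    (F.measure_eq_zero_of_eventually_eq fun s hs =>
      skorohodRegulator_eventually_eq hy hy0 hs.1 ?_)
  have := (add_skorohodRegulator_nonneg hy hs.1.le).lt_of_ne' hs.2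
  linarith

lemma ContinuousOn.exists_forall_Ioc_ne_zero {g : ℝ → ℝ} {a b : ℝ}
    (hg : ContinuousOn g (Icc a b)) (hab : a ≤ b) :
    ∃ p ∈ Icc a b, (p = a ∨ g p = 0) ∧ ∀ s ∈ Ioc p b, g s ≠ 0 := by
  have hZ : IsCompact ({a} ∪ Icc a b ∩ g ⁻¹' {0}) :=
    isCompact_singleton.union (isCompact_Icc.of_isClosed_subset
      (hg.preimage_isClosed_of_isClosed isClosed_Icc isClosed_singleton) inter_subset_left)
  obtain ⟨p, hpZ, hpmax⟩ := hZ.exists_isGreatest (singleton_nonempty a).inl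
  refine ⟨p, ?_, ?_, fun s hs hgs => (hs.1.trans_le (hpmax (Or.inr ⟨?_, hgs⟩))).false⟩
  · rcases hpZ with rfl | hp
    exacts [⟨le_rfl, hab⟩, hp.1]
  · exact hpZ.imp id fun hp => hp.2
  · exact ⟨(hpmax (Or.inl rfl)).trans hs.1.le, hs.2⟩

lemma StieltjesCarriedOnZeros.eq_of_forall_Ioc_ne_zero {g h : ℝ → ℝ}
    (hS : StieltjesCarriedOnZeros g h) {p t : ℝ} (hp : 0 ≤ p) (hpt : p ≤ t)
    (hhp : 0 ≤ h p) (hht : 0 ≤ h t) (hg : ∀ s ∈ Ioc p t, g s ≠ 0) : h t = h p := by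
  obtain ⟨μ, -, hint⟩ := hS
  have hzero :
      ∫⁻ s in Ioc p t, ({0} : Set ℝ).indicator (fun _ => (1 : ENNReal)) (g s) ∂μ = 0 := by
    refine (setLIntegral_congr_fun (g := fun _ => 0) measurableSet_Ioc fun s hs => ?_).trans
      lintegral_zero
    exact indicator_of_notMem (hg s hs) (fun _ => (1 : ENNReal))
  have hsplit := lintegral_union (μ := μ)
    (f := fun s => ({0} : Set ℝ).indicator (fun _ => (1 : ENNReal)) (g s))
    measurableSet_Ioc (Ioc_disjoint_Ioc_of_le (a := 0) (d := t) (le_refl p))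
  rw [Ioc_union_Ioc_eq_Ioc hp hpt, hint t (hp.trans hpt), hint p hp, hzero, add_zero] at hsplit
  exact (ENNReal.ofReal_eq_ofReal_iff hht hhp).1 hsplit

lemma StieltjesCarriedOnZeros.le_skorohodRegulator {y g h : ℝ → ℝ} (hy : Continuous y)
    (hS : StieltjesCarriedOnZeros g h) (hg : ContinuousOn g (Ici 0))
    (hgy : ∀ t, 0 ≤ t → g t = y t + h t) (hh0 : h 0 = 0) (hnn : ∀ t, 0 ≤ t → 0 ≤ h t)
    {t : ℝ} (ht : 0 ≤ t) : h t ≤ skorohodRegulator y t := by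
  obtain ⟨p, hp, hp0 | hgp, hne⟩ := (hg.mono Icc_subset_Ici_self).exists_forall_Ioc_ne_zero ht
  all_goals rw [hS.eq_of_forall_Ioc_ne_zero hp.1 hp.2 (hnn p hp.1) (hnn t ht) hne]
  · rw [hp0, hh0]
    exact skorohodRegulator_nonneg y t
  · linarith [neg_le_skorohodRegulator hy hp, hgy p hp.1]

/-- **Lemma 2.2.1 (one-dimensional Skorohod problem).** For every continuous
`f : [0,∞) → ℝ` with `f(0) = 0` and every `x ≥ 0` there exist unique continuous
nonnegative `g, h` on `[0,∞)` such that (i) `g = x + f + h`, (ii) `h(0) = 0` and `h` is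
nondecreasing, and (iii) the Stieltjes measure `dh` is carried by `{t : g(t) = 0}`. -/
theorem skorohod_problem_one_dim (f : ℝ → ℝ) (hf : ContinuousOn f (Ici 0))
    (hf0 : f 0 = 0) (x : ℝ) (hx : 0 ≤ x) :
    ∃ g h : ℝ → ℝ,
      (ContinuousOn g (Ici 0) ∧ ∀ t : ℝ, 0 ≤ t → 0 ≤ g t) ∧
      (ContinuousOn h (Ici 0) ∧ ∀ t : ℝ, 0 ≤ t → 0 ≤ h t) ∧
      (∀ t : ℝ, 0 ≤ t → g t = x + f t + h t) ∧
      h 0 = 0 ∧ MonotoneOn h (Ici 0) ∧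
      StieltjesCarriedOnZeros g h ∧
      -- uniqueness
      (∀ g₁ h₁ : ℝ → ℝ,
        (ContinuousOn g₁ (Ici 0) ∧ ∀ t : ℝ, 0 ≤ t → 0 ≤ g₁ t) →
        (ContinuousOn h₁ (Ici 0) ∧ ∀ t : ℝ, 0 ≤ t → 0 ≤ h₁ t) →
        (∀ t : ℝ, 0 ≤ t → g₁ t = x + f t + h₁ t) →
        h₁ 0 = 0 → MonotoneOn h₁ (Ici 0) →
        StieltjesCarriedOnZeros g₁ h₁ →
        EqOn g g₁ (Ici 0) ∧ EqOn h h₁ (Ici 0)) := by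
  set y : ℝ → ℝ := fun s => x + f (max s 0)
  have hy : Continuous y :=
    continuous_const.add (hf.comp_continuous (by fun_prop) fun s => le_max_right s 0)
  have hyt : ∀ t, 0 ≤ t → y t = x + f t := fun t ht => by simp [y, max_eq_left ht]
  have hy0 : 0 ≤ y 0 := by simpa [y, hf0] using hx
  have hh := continuous_skorohodRegulator hy hy0
  refine ⟨fun t => y t + skorohodRegulator y t, skorohodRegulator y,
    ⟨(hy.add hh).continuousOn, fun t ht => add_skorohodRegulator_nonneg hy ht⟩,
    ⟨hh.continuousOn, fun t _ => skorohodRegulator_nonneg y t⟩, fun t ht => congrArg (· + skorohodRegulator y t) (hyt t ht),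
    skorohodRegulator_zero hy0, (monotone_skorohodRegulator hy).monotoneOn _,
    stieltjesCarriedOnZeros_skorohodRegulator hy hy0, ?_⟩
  rintro g₁ h₁ ⟨hg₁, hg₁nn⟩ ⟨-, hh₁nn⟩ hgh₁ hh₁0 hmono₁ hS
  have hgy : ∀ t, 0 ≤ t → g₁ t = y t + h₁ t := fun t ht => by rw [hgh₁ t ht, hyt t ht]
  have heq : EqOn (skorohodRegulator y) h₁ (Ici 0) := fun t ht =>
    le_antisymm
      (skorohodRegulator_le hmono₁ ht (hh₁nn t ht) fun s hs => hgy s hs.1 ▸ hg₁nn s hs.1)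
      (hS.le_skorohodRegulator hy hg₁ hgy hh₁0 hh₁nn ht)
  exact ⟨fun t ht => by simp only [hgy t ht, heq ht], heq⟩
end

section
/- Let f ∈ W₀¹ and x ≥ 0. Define g(t) = x + f(t) − min_{0≤s≤t} min(x + f(s), 0) and h(t) = − min_{0≤s≤t} min(x + f(s), 0). Then g ∈ C⁺, h ∈ C⁺, g(t) = x + f(t) + h(t) for all t ≥ 0, h(0) = 0, h is nondecreasing, and the Stieltjes measure dh is carried by {t : g(t) = 0}, i.e. ∫₀ᵗ 1_{{0}}(g(s)) dh(s) = h(t) for all t ≥ 0. -/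
/-!
With `y = x + f`, `h` is the running maximum of the negative part of `y`, so it can only grow at
times where `y` touches `-h`, that is where `g = 0`. Off the zero set of `g` the running minimum is
locally constant, so the Stieltjes measure `dh` gives that set no mass.
-/

open MeasureTheory Set

open Filter Topology

theorem StieltjesFunction.measure_eq_zero_of_eventually_eq_s1 (S : StieltjesFunction ℝ) {s : Set ℝ}
    (hs : ∀ x ∈ s, ∀ᶠ y in 𝓝 x, S y = S x) : S.measure s = 0 := by
  refine measure_null_of_locally_null s fun x hx => ?_
  obtain ⟨a, b, ⟨hax, hxb⟩, hab⟩ := mem_nhds_iff_exists_Ioo_subset.1 (hs x hx)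
  obtain ⟨c, hac, hcx⟩ := exists_between hax
  obtain ⟨d, hxd, hdb⟩ := exists_between hxb
  refine ⟨Ioc c d, mem_nhdsWithin_of_mem_nhds (mem_of_superset (Ioo_mem_nhds hcx hxd)
    Ioo_subset_Ioc_self), ?_⟩
  have hc : S c = S x := hab ⟨hac, hcx.trans hxb⟩
  have hd : S d = S x := hab ⟨hax.trans hxd, hdb⟩
  rw [S.measure_Ioc, hc, hd, sub_self, ENNReal.ofReal_zero]

theorem exists_stieltjesFunction_eqOn {h : ℝ → ℝ} (hmono : MonotoneOn h (Ici 0))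
    (hcont : ContinuousOn h (Ici 0)) : ∃ S : StieltjesFunction ℝ, EqOn S h (Ici 0) := by
  have hcont' : Continuous fun t => h (max t 0) :=
    hcont.comp_continuous (by fun_prop) fun t => le_max_right t 0
  refine ⟨⟨fun t => h (max t 0), fun a b hab => hmono (le_max_right a 0) (le_max_right b 0)
    (max_le_max hab le_rfl), fun t => hcont'.continuousWithinAt⟩, fun t ht => ?_⟩
  change h (max t 0) = h t
  rw [max_eq_left ht]

theorem stieltjesCarriedOnZeros_of_eventually_eq {g h : ℝ → ℝ} (hmono : MonotoneOn h (Ici 0))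
    (hcont : ContinuousOn h (Ici 0)) (h0 : h 0 = 0)
    (hloc : ∀ s, 0 < s → g s ≠ 0 → ∀ᶠ u in 𝓝 s, h u = h s) :
    StieltjesCarriedOnZeros g h := by
  obtain ⟨S, hS⟩ := exists_stieltjesFunction_eqOn hmono hcont
  have hIoc : ∀ a b : ℝ, 0 ≤ a → a ≤ b →
      S.measure (Ioc a b) = ENNReal.ofReal (h b - h a) :=
    fun a b ha hab => by rw [S.measure_Ioc, hS ha, hS (ha.trans hab)]
  have hnull : S.measure {s | 0 < s ∧ g s ≠ 0} = 0 :=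
    S.measure_eq_zero_of_eventually_eq_s1 fun s ⟨hs, hgs⟩ => by
      filter_upwards [hloc s hs hgs, Ioi_mem_nhds hs] with u hu hu0
      rw [hS (Ioi_subset_Ici_self hu0), hS hs.le, hu]
  refine ⟨S.measure, hIoc, fun t ht => ?_⟩
  have hae : ∀ᵐ s ∂S.measure.restrict (Ioc 0 t),
      indicator {(0 : ℝ)} (fun _ => (1 : ENNReal)) (g s) = 1 := by
    rw [ae_restrict_iff' measurableSet_Ioc]
    filter_upwards [measure_eq_zero_iff_ae_notMem.1 hnull] with s hs hsI
    have hgs : g s = 0 := not_not.1 fun hgs => hs ⟨hsI.1, hgs⟩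
    simp [hgs]
  rw [lintegral_congr_ae hae, setLIntegral_one, hIoc 0 t le_rfl ht, h0, sub_zero]

noncomputable def runMin (F : ℝ → ℝ) (t : ℝ) : ℝ := sInf (F '' Icc 0 t)

section RunMin

variable {F : ℝ → ℝ}

theorem runMin_zero (F : ℝ → ℝ) : runMin F 0 = F 0 := by
  rw [runMin, Icc_self, image_singleton, csInf_singleton]

theorem isCompact_image_Icc (hF : ContinuousOn F (Ici 0)) (t : ℝ) : IsCompact (F '' Icc 0 t) :=
  isCompact_Icc.image_of_continuousOn (hF.mono Icc_subset_Ici_self)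

theorem runMin_le (hF : ContinuousOn F (Ici 0)) {s t : ℝ} (hs : 0 ≤ s) (hst : s ≤ t) :
    runMin F t ≤ F s :=
  csInf_le (isCompact_image_Icc hF t).bddBelow ⟨s, ⟨hs, hst⟩, rfl⟩

theorem runMin_antitoneOn (hF : ContinuousOn F (Ici 0)) : AntitoneOn (runMin F) (Ici 0) :=
  fun _ hs t _ hst => csInf_le_csInf (isCompact_image_Icc hF t).bddBelow
    ((nonempty_Icc.2 hs).image F) (image_mono (Icc_subset_Icc le_rfl hst))

theorem exists_eq_runMin (hF : ContinuousOn F (Ici 0)) {t : ℝ} (ht : 0 ≤ t) :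
    ∃ s ∈ Icc 0 t, F s = runMin F t :=
  (isCompact_image_Icc hF t).sInf_mem ((nonempty_Icc.2 ht).image F)

theorem continuousOn_runMin (hF : ContinuousOn F (Ici 0)) : ContinuousOn (runMin F) (Ici 0) := by
  -- rescale `[0, t]` to the fixed compact interval `[0, 1]`
  have hF' : Continuous fun p : ℝ × ℝ => F (max (p.2 * p.1) 0) :=
    hF.comp_continuous (by fun_prop) fun p => le_max_right (p.2 * p.1) 0
  refine ((isCompact_Icc (a := (0 : ℝ)) (b := 1)).continuous_sInf
    (f := fun t u => F (max (u * t) 0)) hF').continuousOn.congr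
    fun t (ht : 0 ≤ t) => ?_
  have hscale : (fun u => u * t) '' Icc 0 1 = Icc 0 t := by
    rw [image_mul_right_Icc zero_le_one ht, zero_mul, one_mul]
  have hmax : EqOn (fun u => F (max (u * t) 0)) (F ∘ fun u => u * t) (Icc 0 1) :=
    fun u hu => by simp [max_eq_left (mul_nonneg hu.1 ht)]
  change sInf (F '' Icc 0 t) = sInf ((fun u => F (max (u * t) 0)) '' Icc 0 1)
  rw [image_congr hmax, image_comp, hscale]

theorem exists_mem_Ioc_eq_runMin_of_runMin_lt (hF : ContinuousOn F (Ici 0)) {a c : ℝ}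
    (ha : 0 ≤ a) (hac : a ≤ c) (hlt : runMin F c < runMin F a) :
    ∃ s ∈ Ioc a c, F s = runMin F s ∧ runMin F s < runMin F a := by
  obtain ⟨s, ⟨hs, hsc⟩, hFs⟩ := exists_eq_runMin hF (ha.trans hac)
  have has : a < s := lt_of_not_ge fun hsa => (runMin_le hF hs hsa).not_gt (hFs ▸ hlt)
  have hms : runMin F s = runMin F c :=
    le_antisymm (hFs ▸ runMin_le hF hs le_rfl) (runMin_antitoneOn hF hs (ha.trans hac) hsc)
  exact ⟨s, ⟨has, hsc⟩, hms ▸ hFs, hms ▸ hlt⟩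

end RunMin

section Skorohod

variable {y : ℝ → ℝ}

theorem runMin_min_zero_eq_of_forall_ne (hy : ContinuousOn y (Ici 0)) {a c : ℝ} (ha : 0 ≤ a)
    (hac : a ≤ c) (hne : ∀ v ∈ Ioc a c, y v ≠ runMin (fun r => min (y r) 0) v) :
    runMin (fun r => min (y r) 0) c = runMin (fun r => min (y r) 0) a := by
  have hF : ContinuousOn (fun r => min (y r) 0) (Ici 0) := hy.inf continuousOn_const
  refine (runMin_antitoneOn hF ha (ha.trans hac) hac).eq_or_lt.elim id fun hlt => ?_
  obtain ⟨v, hv, hFv, hmv⟩ := exists_mem_Ioc_eq_runMin_of_runMin_lt hF ha hac hlt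
  have hneg : min (y v) 0 < 0 := by
    linarith [runMin_le hF ha le_rfl, min_le_right (y a) 0]
  have hyv : y v < 0 := (min_lt_iff.1 hneg).resolve_right (lt_irrefl 0)
  rw [min_eq_left hyv.le] at hFv
  exact absurd hFv (hne v hv)

theorem eventually_runMin_min_zero_eq (hy : ContinuousOn y (Ici 0)) {s : ℝ} (hs : 0 < s)
    (hne : y s ≠ runMin (fun r => min (y r) 0) s) :
    ∀ᶠ u in 𝓝 s, runMin (fun r => min (y r) 0) u = runMin (fun r => min (y r) 0) s := by
  set m := runMin fun r => min (y r) 0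
  have hgap : ContinuousAt (fun u => y u - m u) s :=
    (hy.sub (continuousOn_runMin (hy.inf continuousOn_const))).continuousAt (Ici_mem_nhds hs)
  have hgood : ∀ᶠ u in 𝓝 s, 0 < u ∧ y u ≠ m u :=
    (eventually_gt_nhds hs).and
      ((hgap.eventually_ne (sub_ne_zero.2 hne)).mono fun _ => sub_ne_zero.1)
  obtain ⟨a, b, ⟨has, hsb⟩, hab⟩ := mem_nhds_iff_exists_Ioo_subset.1 hgood
  have hconst : ∀ u ∈ Ioo a b, ∀ v ∈ Ioo a b, u ≤ v → m v = m u := fun u hu v hv huv =>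
    runMin_min_zero_eq_of_forall_ne hy (hab hu).1.le huv
      fun w hw => (hab ⟨hu.1.trans hw.1, hw.2.trans_lt hv.2⟩).2
  filter_upwards [Ioo_mem_nhds has hsb] with u hu
  rcases le_total u s with hus | hsu
  · exact (hconst u hu s ⟨has, hsb⟩ hus).symm
  · exact hconst s ⟨has, hsb⟩ u hu hsu

end Skorohod

/-- **Explicit solution of the one-dimensional Skorohod problem** (proof of Lemma 2.2.1).
For continuous `f : [0,∞) → ℝ` with `f(0) = 0` and `x ≥ 0`, the functions
`g(t) = x + f(t) − min_{0 ≤ s ≤ t} min(x + f(s), 0)` and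
`h(t) = − min_{0 ≤ s ≤ t} min(x + f(s), 0)` are continuous and nonnegative on `[0,∞)`,
satisfy `g = x + f + h`, `h(0) = 0`, `h` is nondecreasing, and the Stieltjes measure `dh`
is carried by `{t : g(t) = 0}`. -/
theorem skorohod_problem_one_dim_explicit (f : ℝ → ℝ) (hf : ContinuousOn f (Ici 0))
    (hf0 : f 0 = 0) (x : ℝ) (hx : 0 ≤ x) (g h : ℝ → ℝ)
    (hg_def : ∀ t : ℝ, 0 ≤ t →
      g t = x + f t - sInf ((fun s => min (x + f s) 0) '' Icc 0 t))
    (hh_def : ∀ t : ℝ, 0 ≤ t →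
      h t = - sInf ((fun s => min (x + f s) 0) '' Icc 0 t)) :
    (ContinuousOn g (Ici 0) ∧ ∀ t : ℝ, 0 ≤ t → 0 ≤ g t) ∧
    (ContinuousOn h (Ici 0) ∧ ∀ t : ℝ, 0 ≤ t → 0 ≤ h t) ∧
    (∀ t : ℝ, 0 ≤ t → g t = x + f t + h t) ∧
    h 0 = 0 ∧ MonotoneOn h (Ici 0) ∧
    StieltjesCarriedOnZeros g h := by
  have hy : ContinuousOn (fun s => x + f s) (Ici 0) := continuousOn_const.add hf
  have hF : ContinuousOn (fun s => min (x + f s) 0) (Ici 0) := hy.inf continuousOn_const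
  have hm : ContinuousOn (runMin fun s => min (x + f s) 0) (Ici 0) := continuousOn_runMin hF
  have hh0 : h 0 = 0 := by rw [hh_def 0 le_rfl, ← runMin, runMin_zero]; simp [hf0, hx]
  have hmono : MonotoneOn h (Ici 0) := fun a ha b hb hab => by
    rw [hh_def a ha, hh_def b hb]; exact neg_le_neg (runMin_antitoneOn hF ha hb hab)
  have hcont : ContinuousOn h (Ici 0) := hm.neg.congr hh_def
  refine ⟨⟨(hy.sub hm).congr hg_def, fun t ht => ?_⟩,
    ⟨hcont, fun t ht => hh0 ▸ hmono self_mem_Ici ht ht⟩,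
    fun t ht => by rw [hg_def t ht, hh_def t ht]; ring, hh0, hmono,
    stieltjesCarriedOnZeros_of_eventually_eq hmono hcont hh0 fun s hs hgs => ?_⟩
  · rw [hg_def t ht, sub_nonneg]
    exact (runMin_le hF ht le_rfl).trans (min_le_left _ _)
  · have hne : x + f s ≠ runMin (fun r => min (x + f r) 0) s := by
      rwa [hg_def s hs.le, sub_ne_zero] at hgs
    filter_upwards [eventually_runMin_min_zero_eq hy hs hne, Ioi_mem_nhds hs] with u hu hu0
    rw [hh_def u hu0.le, hh_def s hs.le, ← runMin, ← runMin, hu]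
end

section
/- Let f ∈ W₀¹ and x ≥ 0. Suppose (g, h) and (g₁, h₁) are two pairs of functions in C⁺ such that for i = 1, 2: g = x + f + h and g₁ = x + f + h₁ on [0,∞); h(0) = h₁(0) = 0; h and h₁ are nondecreasing; and the Stieltjes measures dh and dh₁ are carried by {t : g(t) = 0} and {t : g₁(t) = 0} respectively. Then g(t) = g₁(t) and h(t) = h₁(t) for all t ≥ 0. -/
/-!
If `g t > g₁ t` for some `t`, let `s` be the last time before `t` with `g s ≤ g₁ s`. On `(s, t]`
we have `g > g₁ ≥ 0`, so `dh` does not charge `(s, t]` and `h t = h s`, while `h₁ t ≥ h₁ s`.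
Since `g - g₁ = h - h₁`, this gives `g t - g₁ t ≤ g s - g₁ s ≤ 0`, a contradiction.
-/

open MeasureTheory Set

theorem ContinuousOn.exists_last_nonpos {φ : ℝ → ℝ} {a b : ℝ} (hab : a ≤ b)
    (hφ : ContinuousOn φ (Icc a b)) (ha : φ a ≤ 0) (hb : 0 < φ b) :
    ∃ s ∈ Ico a b, φ s ≤ 0 ∧ ∀ u ∈ Ioc s b, 0 < φ u := by
  have hS : IsCompact (Icc a b ∩ φ ⁻¹' Iic 0) :=
    isCompact_Icc.of_isClosed_subset (hφ.preimage_isClosed_of_isClosed isClosed_Icc isClosed_Iic)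
      inter_subset_left
  obtain ⟨s, ⟨⟨has, hsb⟩, hs⟩, hs_max⟩ := hS.exists_isGreatest ⟨a, ⟨le_rfl, hab⟩, ha⟩
  refine ⟨s, ⟨has, hsb.lt_of_ne ?_⟩, hs, fun u ⟨hsu, hub⟩ => ?_⟩
  · rintro rfl
    exact (hb.trans_le hs).false
  · by_contra! hu
    exact (hs_max ⟨⟨has.trans hsu.le, hub⟩, hu⟩).not_gt hsu

namespace StieltjesCarriedOnZeros

variable {g h : ℝ → ℝ}

theorem eq_of_ne_zero_on_Ioc (hcarry : StieltjesCarriedOnZeros g h)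
    (hh_nonneg : ∀ t, 0 ≤ t → 0 ≤ h t) {s t : ℝ} (hs : 0 ≤ s) (hst : s ≤ t)
    (hg : ∀ u ∈ Ioc s t, g u ≠ 0) : h t = h s := by
  obtain ⟨μ, -, hμ⟩ := hcarry
  have hzero : ∫⁻ u in Ioc s t, indicator {(0 : ℝ)} (fun _ => (1 : ENNReal)) (g u) ∂μ = 0 := by
    rw [setLIntegral_congr_fun measurableSet_Ioc
      (fun u hu => indicator_of_notMem (mem_singleton_iff.not.mpr (hg u hu)) _), lintegral_zero]
  have hsplit := hμ t (hs.trans hst)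
  rw [← Ioc_union_Ioc_eq_Ioc hs hst,
    lintegral_union measurableSet_Ioc (Ioc_disjoint_Ioc_of_le le_rfl), hμ s hs, hzero,
    add_zero] at hsplit
  exact ((ENNReal.ofReal_eq_ofReal_iff (hh_nonneg s hs) (hh_nonneg t (hs.trans hst))).mp
    hsplit).symm

theorem le_of_sub_eq_sub (hcarry : StieltjesCarriedOnZeros g h)
    (hh_nonneg : ∀ t, 0 ≤ t → 0 ≤ h t) {g₁ h₁ : ℝ → ℝ}
    (hg : ContinuousOn g (Ici 0)) (hg₁ : ContinuousOn g₁ (Ici 0))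
    (hg₁_nonneg : ∀ t, 0 ≤ t → 0 ≤ g₁ t) (hh₁_mono : MonotoneOn h₁ (Ici 0))
    (hsub : ∀ t, 0 ≤ t → g t - g₁ t = h t - h₁ t) (h0 : g 0 ≤ g₁ 0) {t : ℝ} (ht : 0 ≤ t) :
    g t ≤ g₁ t := by
  by_contra! hlt
  obtain ⟨s, ⟨hs, hst⟩, hs_le, hpos⟩ := ((hg.sub hg₁).mono Icc_subset_Ici_self).exists_last_nonpos
    ht (sub_nonpos.mpr h0) (sub_pos.mpr hlt)
  have hh : h t = h s := hcarry.eq_of_ne_zero_on_Ioc hh_nonneg hs hst.le fun u hu =>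
    (lt_of_le_of_lt (hg₁_nonneg u (hs.trans hu.1.le)) (sub_pos.mp (hpos u hu))).ne'
  have hh₁ : h₁ s ≤ h₁ t := hh₁_mono hs ht hst.le
  rw [Pi.sub_apply] at hs_le
  linarith [hsub s hs, hsub t ht]

end StieltjesCarriedOnZeros

theorem skorohod_problem_one_dim_unique_general (f : ℝ → ℝ) (x : ℝ) (g h g₁ h₁ : ℝ → ℝ)
    (hg_cont : ContinuousOn g (Ici 0)) (hg_nonneg : ∀ t : ℝ, 0 ≤ t → 0 ≤ g t)
    (hh_nonneg : ∀ t : ℝ, 0 ≤ t → 0 ≤ h t)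
    (hg₁_cont : ContinuousOn g₁ (Ici 0)) (hg₁_nonneg : ∀ t : ℝ, 0 ≤ t → 0 ≤ g₁ t)
    (hh₁_nonneg : ∀ t : ℝ, 0 ≤ t → 0 ≤ h₁ t)
    (heq : ∀ t : ℝ, 0 ≤ t → g t = x + f t + h t)
    (heq₁ : ∀ t : ℝ, 0 ≤ t → g₁ t = x + f t + h₁ t)
    (hh0 : h 0 = 0) (hh₁0 : h₁ 0 = 0)
    (hh_mono : MonotoneOn h (Ici 0)) (hh₁_mono : MonotoneOn h₁ (Ici 0))
    (hcarry : StieltjesCarriedOnZeros g h) (hcarry₁ : StieltjesCarriedOnZeros g₁ h₁) :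
    EqOn g g₁ (Ici 0) ∧ EqOn h h₁ (Ici 0) := by
  have hsub : ∀ t, 0 ≤ t → g t - g₁ t = h t - h₁ t := fun t ht => by
    rw [heq t ht, heq₁ t ht]; ring
  have h0 : g 0 = g₁ 0 := by rw [heq 0 le_rfl, heq₁ 0 le_rfl, hh0, hh₁0]
  have hg : EqOn g g₁ (Ici 0) := fun t ht => le_antisymm
    (hcarry.le_of_sub_eq_sub hh_nonneg hg_cont hg₁_cont hg₁_nonneg hh₁_mono hsub h0.le ht)
    (hcarry₁.le_of_sub_eq_sub hh₁_nonneg hg₁_cont hg_cont hg_nonneg hh_mono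
      (fun t ht => by linarith [hsub t ht]) h0.ge ht)
  exact ⟨hg, fun t ht => by linarith [hsub t ht, hg ht]⟩

/-- **Uniqueness in the one-dimensional Skorohod problem** (Lemma 2.2.1, uniqueness part).
If `(g, h)` and `(g₁, h₁)` are two pairs of continuous nonnegative functions on `[0,∞)`
with `g = x + f + h`, `g₁ = x + f + h₁`, `h(0) = h₁(0) = 0`, `h, h₁` nondecreasing, and the
Stieltjes measures `dh`, `dh₁` carried by the zero sets of `g`, `g₁` respectively, then
`g = g₁` and `h = h₁` on `[0,∞)`. -/
theorem skorohod_problem_one_dim_unique (f : ℝ → ℝ) (hf : ContinuousOn f (Ici 0))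
    (hf0 : f 0 = 0) (x : ℝ) (hx : 0 ≤ x) (g h g₁ h₁ : ℝ → ℝ)
    (hg_cont : ContinuousOn g (Ici 0)) (hg_nonneg : ∀ t : ℝ, 0 ≤ t → 0 ≤ g t)
    (hh_cont : ContinuousOn h (Ici 0)) (hh_nonneg : ∀ t : ℝ, 0 ≤ t → 0 ≤ h t)
    (hg₁_cont : ContinuousOn g₁ (Ici 0)) (hg₁_nonneg : ∀ t : ℝ, 0 ≤ t → 0 ≤ g₁ t)
    (hh₁_cont : ContinuousOn h₁ (Ici 0)) (hh₁_nonneg : ∀ t : ℝ, 0 ≤ t → 0 ≤ h₁ t)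
    (heq : ∀ t : ℝ, 0 ≤ t → g t = x + f t + h t)
    (heq₁ : ∀ t : ℝ, 0 ≤ t → g₁ t = x + f t + h₁ t)
    (hh0 : h 0 = 0) (hh₁0 : h₁ 0 = 0)
    (hh_mono : MonotoneOn h (Ici 0)) (hh₁_mono : MonotoneOn h₁ (Ici 0))
    (hcarry : StieltjesCarriedOnZeros g h) (hcarry₁ : StieltjesCarriedOnZeros g₁ h₁) :
    EqOn g g₁ (Ici 0) ∧ EqOn h h₁ (Ici 0) :=
  skorohod_problem_one_dim_unique_general f x g h g₁ h₁ hg_cont hg_nonneg hh_nonneg hg₁_cont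
    hg₁_nonneg hh₁_nonneg heq heq₁ hh0 hh₁0 hh_mono hh₁_mono hcarry hcarry₁
end

section
/- Let D be a nonempty convex open set in ℝ^d. If w : [0,∞) → ℝ^d is a step function (right-continuous, piecewise constant on a locally finite partition of [0,∞)) with w(0) ∈ D̄, then there exists a solution (X, φ) of the Skorohod equation X = w + φ for D. -/
open MeasureTheory Set Filter Topology
open scoped RealInnerProductSpace

noncomputable section

abbrev Euc (d : ℕ) := EuclideanSpace ℝ (Fin d)

/-- Measure data representing the Lebesgue–Stieltjes measures `dφ` (componentwise, as a
difference of locally finite nonnegative measures) and `d|φ|` (the total variation measure)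
of a function `φ : [0,∞) → ℝ^d` of locally bounded variation. -/
structure BVMeasureData (d : ℕ) (φ : ℝ → Euc d) where
  pos : Fin d → Measure ℝ
  neg : Fin d → Measure ℝ
  var : Measure ℝ
  pos_fin : ∀ i : Fin d, ∀ t : ℝ, pos i (Icc 0 t) < ⊤
  neg_fin : ∀ i : Fin d, ∀ t : ℝ, neg i (Icc 0 t) < ⊤
  increments : ∀ i : Fin d, ∀ s t : ℝ, 0 ≤ s → s ≤ t →
    (pos i (Ioc s t)).toReal - (neg i (Ioc s t)).toReal = φ t i - φ s i
  var_eq : ∀ s t : ℝ, 0 ≤ s → s ≤ t → var (Ioc s t) = eVariationOn φ (Icc s t)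

/-- The Stieltjes integral `∫_{(s,t]} ⟨f(τ), dφ(τ)⟩`. -/
def BVMeasureData.pairing {d : ℕ} {φ : ℝ → Euc d} (M : BVMeasureData d φ)
    (f : ℝ → Euc d) (s t : ℝ) : ℝ :=
  ∑ i : Fin d, ((∫ τ in Ioc s t, f τ i ∂(M.pos i)) - ∫ τ in Ioc s t, f τ i ∂(M.neg i))

/-- `f` is right-continuous at every `t ≥ 0`. -/
def RightContinuousOnNonneg {E : Type*} [TopologicalSpace E] (f : ℝ → E) : Prop :=
  ∀ t : ℝ, 0 ≤ t → ContinuousWithinAt f (Ici t) t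

/-- `f` has left limits at every `t > 0`. -/
def HasLeftLimitsOnPos {E : Type*} [TopologicalSpace E] (f : ℝ → E) : Prop :=
  ∀ t : ℝ, 0 < t → ∃ L, Tendsto f (𝓝[<] t) (𝓝 L)

/-- `φ` is associated with `X` (relative to the convex domain `D`):
`φ` is rcll of locally bounded variation with `φ(0) = 0`, the measure `d|φ|` does not
charge `{t ≥ 0 : X(t) ∈ D}`, and `∫_{(s,t]} ⟨η(τ) − X(τ), dφ(τ)⟩ ≥ 0` for every
continuous `η : [0,∞) → closure D`. -/
structure IsAssociated {d : ℕ} (D : Set (Euc d)) (X : ℝ → Euc d) (φ : ℝ → Euc d)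
    (M : BVMeasureData d φ) : Prop where
  rightCont : RightContinuousOnNonneg φ
  leftLim : HasLeftLimitsOnPos φ
  bv : ∀ t : ℝ, 0 ≤ t → eVariationOn φ (Icc 0 t) < ⊤
  init : φ 0 = 0
  carried : M.var {t : ℝ | 0 ≤ t ∧ X t ∈ D} = 0
  normal : ∀ η : ℝ → Euc d, Continuous η → (∀ t : ℝ, 0 ≤ t → η t ∈ closure D) →
    ∀ s t : ℝ, 0 ≤ s → s ≤ t → 0 ≤ M.pairing (fun τ => η τ - X τ) s t

/-- `(X, φ)` (with measure data `M` for `φ`) solves the Skorohod equation `X = w + φ`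
for the domain `D`. -/
structure IsSkorohodSolution {d : ℕ} (D : Set (Euc d)) (w X φ : ℝ → Euc d)
    (M : BVMeasureData d φ) : Prop where
  rightCont : RightContinuousOnNonneg X
  leftLim : HasLeftLimitsOnPos X
  mem : ∀ t : ℝ, 0 ≤ t → X t ∈ closure D
  eqn : ∀ t : ℝ, 0 ≤ t → X t = w t + φ t
  assoc : IsAssociated D X φ M


/-- `w` is a step function: right-continuous and piecewise constant on a locally finite
partition `0 = T₀ < T₁ < T₂ < ⋯ → ∞` of `[0,∞)`. -/
def IsStepFunction {E : Type*} (w : ℝ → E) : Prop :=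
  ∃ T : ℕ → ℝ, StrictMono T ∧ T 0 = 0 ∧ Tendsto T atTop atTop ∧
    ∀ n : ℕ, ∀ t ∈ Ico (T n) (T (n + 1)), w t = w (T n)

/-!
A step function moves only at the grid times `T (n + 1)`, so the solution is built one jump at a
time: at `T (n + 1)` add the jump of `w` to the current position and map the result back to
`closure D` by the metric projection `π` (`reflectedSeq` and `pushSeq` are the values of `X` and
`φ` at the grid times). Between grid times `X` and `φ` are constant, so `dφ` and `d|φ|` are atomic
with atoms at the grid times. At each atom the condition on an associated `φ` is the variational
inequality `⟪y - π y, z - π y⟫ ≤ 0` of the projection, and `φ` can only jump where `π` moves its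
argument, which it does not do when `π y` lies in the open set `D`.
-/

open scoped ENNReal

theorem eq_of_forall_inner_sub_nonpos_of_mem_interior {E : Type*} [NormedAddCommGroup E]
    [InnerProductSpace ℝ E] {K : Set E} {y v : E}
    (hv : v ∈ interior K) (h : ∀ z ∈ K, ⟪y - v, z - v⟫ ≤ 0) : v = y := by
  have hmax : IsLocalMax (fun z => ⟪y - v, z - v⟫) v := by
    filter_upwards [mem_interior_iff_mem_nhds.1 hv] with z hz
    simpa using h z hz
  have hderiv : HasFDerivAt (fun z => ⟪y - v, z - v⟫) (innerSL ℝ (y - v)) v :=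
    ((innerSL ℝ (y - v)).hasFDerivAt.comp v ((hasFDerivAt_id v).sub_const v)).congr_fderiv
      (by ext; simp)
  have := congrArg (fun L => L (y - v)) (hmax.hasFDerivAt_eq_zero hderiv)
  simp only [innerSL_apply_apply, zero_apply, inner_self_eq_zero, sub_eq_zero] at this
  exact this.symm

theorem eVariationOn_nat_Icc {E : Type*} [PseudoEMetricSpace E] (p : ℕ → E) {m n : ℕ}
    (hmn : m ≤ n) : eVariationOn p (Icc m n) = ∑ i ∈ Finset.Ico m n, edist (p i) (p (i + 1)) := by
  have himage : (fun i => m + i) '' Iic (n - m) = Icc m n := by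
    ext k
    simp only [mem_image, mem_Iic, mem_Icc]
    exact ⟨fun ⟨i, hi, hk⟩ => by omega, fun hk => ⟨k - m, by omega, by omega⟩⟩
  rw [← himage, eVariationOn.image_range_of_monotone p (fun i j hij => by omega),
    Finset.sum_Ico_eq_sum_range]
  simp only [Nat.add_assoc]

structure IsTimeGrid (T : ℕ → ℝ) : Prop where
  strictMono : StrictMono T
  zero : T 0 = 0
  tendsto : Tendsto T atTop atTop

namespace IsTimeGrid

variable {T : ℕ → ℝ} (hT : IsTimeGrid T) {s t : ℝ} {k : ℕ}

include hT in
theorem exists_lt (t : ℝ) : ∃ n, t < T (n + 1) :=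
  ((hT.tendsto.comp (tendsto_add_atTop_nat 1)).eventually_gt_atTop t).exists

/-- The `k` with `t ∈ [T k, T (k + 1))`; it is `0` for `t < 0`. -/
def index (t : ℝ) : ℕ := Nat.find (hT.exists_lt t)

theorem lt_index_iff : k < hT.index t ↔ T (k + 1) ≤ t := by
  simp only [index, Nat.lt_find_iff, not_lt]
  exact ⟨fun h => h k le_rfl, fun h m hm => (hT.strictMono.monotone (by omega)).trans h⟩

theorem index_le_iff : hT.index t ≤ k ↔ t < T (k + 1) := by
  rw [← not_lt, lt_index_iff, not_le]

theorem lt_T_index_succ (t : ℝ) : t < T (hT.index t + 1) :=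
  hT.index_le_iff.1 le_rfl

theorem T_index_le (ht : 0 ≤ t) : T (hT.index t) ≤ t := by
  rcases h : hT.index t with _ | k
  · rwa [hT.zero]
  · exact hT.lt_index_iff.1 (by omega)

theorem index_eq (h₁ : T k ≤ t) (h₂ : t < T (k + 1)) : hT.index t = k := by
  refine le_antisymm (hT.index_le_iff.2 h₂) ?_
  cases k with
  | zero => exact Nat.zero_le _
  | succ k => exact hT.lt_index_iff.2 h₁

theorem index_T (k : ℕ) : hT.index (T k) = k :=
  hT.index_eq le_rfl (hT.strictMono k.lt_succ_self)

theorem index_mono : Monotone hT.index := fun _ t hst =>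
  hT.index_le_iff.2 (hst.trans_lt (hT.lt_T_index_succ t))

theorem T_succ_mem_Ioc_iff : T (k + 1) ∈ Ioc s t ↔ k ∈ Finset.Ico (hT.index s) (hT.index t) := by
  rw [mem_Ioc, Finset.mem_Ico, hT.index_le_iff, hT.lt_index_iff]

theorem image_index_Icc (hst : s ≤ t) : hT.index '' Icc s t = Icc (hT.index s) (hT.index t) := by
  refine Subset.antisymm (image_subset_iff.2 fun u hu => ⟨hT.index_mono hu.1, hT.index_mono hu.2⟩)
    fun k hk => ?_
  rcases hk.1.eq_or_lt with rfl | hlt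
  · exact ⟨s, left_mem_Icc.2 hst, rfl⟩
  obtain ⟨j, rfl⟩ : ∃ j, k = j + 1 := ⟨k - 1, by omega⟩
  refine ⟨T (j + 1), ⟨?_, hT.lt_index_iff.1 hk.2⟩, hT.index_T _⟩
  exact (hT.index_le_iff.1 (Nat.lt_succ_iff.1 hlt)).le

theorem index_eventuallyEq_nhdsGE (ht : 0 ≤ t) : hT.index =ᶠ[𝓝[≥] t] fun _ => hT.index t := by
  filter_upwards [Ico_mem_nhdsGE (hT.lt_T_index_succ t)] with u hu
  exact hT.index_eq ((hT.T_index_le ht).trans hu.1) hu.2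

theorem exists_index_eventuallyEq_nhdsLT (ht : 0 < t) :
    ∃ k, hT.index =ᶠ[𝓝[<] t] fun _ => k := by
  obtain ⟨k, hk, hkt⟩ :=
    hT.strictMono.exists_between_of_tendsto_atTop hT.tendsto (x := t) (by rwa [hT.zero])
  refine ⟨k, ?_⟩
  filter_upwards [Ioo_mem_nhdsLT hk] with u hu
  exact hT.index_eq hu.1.le (hu.2.trans_le hkt)

theorem rightContinuousOnNonneg_comp_index {α : Type*} [TopologicalSpace α] (u : ℕ → α) :
    RightContinuousOnNonneg (u ∘ hT.index) := fun _ ht =>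
  tendsto_const_nhds.congr' ((hT.index_eventuallyEq_nhdsGE ht).fun_comp u).symm

theorem hasLeftLimitsOnPos_comp_index {α : Type*} [TopologicalSpace α] (u : ℕ → α) :
    HasLeftLimitsOnPos (u ∘ hT.index) := fun _ ht =>
  let ⟨k, hk⟩ := hT.exists_index_eventuallyEq_nhdsLT ht
  ⟨u k, tendsto_const_nhds.congr' (hk.fun_comp u).symm⟩

theorem eVariationOn_comp_index {E : Type*} [PseudoEMetricSpace E] (p : ℕ → E) (hst : s ≤ t) :
    eVariationOn (p ∘ hT.index) (Icc s t) =
      ∑ n ∈ Finset.Ico (hT.index s) (hT.index t), edist (p n) (p (n + 1)) := by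
  rw [eVariationOn.comp_eq_of_monotoneOn p _ (hT.index_mono.monotoneOn _),
    hT.image_index_Icc hst, eVariationOn_nat_Icc p (hT.index_mono hst)]

end IsTimeGrid

section AtomicMeasure

variable {α : Type*} [MeasurableSpace α] {a : ℕ → α} {c : ℕ → ℝ≥0∞} {S : Set α} {F : Finset ℕ}

def atomicMeasure (a : ℕ → α) (c : ℕ → ℝ≥0∞) : Measure α :=
  Measure.sum fun n => c n • Measure.dirac (a n)

theorem atomicMeasure_apply_eq_zero [MeasurableSingletonClass α] (h : ∀ n, a n ∈ S → c n = 0) :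
    atomicMeasure a c S = 0 := by
  rw [atomicMeasure, Measure.sum_apply_of_countable]
  refine ENNReal.tsum_eq_zero.2 fun n => ?_
  by_cases hn : a n ∈ S <;> simp [hn, h n]

theorem restrict_atomicMeasure (hS : MeasurableSet S) (hF : ∀ n, a n ∈ S ↔ n ∈ F) :
    (atomicMeasure a c).restrict S = ∑ n ∈ F, c n • Measure.dirac (a n) := by
  ext U hU
  rw [Measure.restrict_apply hU, atomicMeasure, Measure.sum_apply _ (hU.inter hS),
    Measure.finsetSum_apply, tsum_eq_sum (s := F) fun n hn => by
      simp [Measure.dirac_apply' _ (hU.inter hS), (hF n).not.2 hn]]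
  refine Finset.sum_congr rfl fun n hn => ?_
  by_cases hnU : a n ∈ U <;> simp [hnU, (hF n).2 hn, hU, hU.inter hS]

theorem atomicMeasure_apply (hS : MeasurableSet S) (hF : ∀ n, a n ∈ S ↔ n ∈ F) :
    atomicMeasure a c S = ∑ n ∈ F, c n := by
  rw [← Measure.restrict_apply_univ, restrict_atomicMeasure hS hF]
  simp

theorem setIntegral_atomicMeasure [MeasurableSingletonClass α] (hc : ∀ n, c n ≠ ∞)
    (hS : MeasurableSet S) (hF : ∀ n, a n ∈ S ↔ n ∈ F) (g : α → ℝ) :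
    ∫ x in S, g x ∂atomicMeasure a c = ∑ n ∈ F, (c n).toReal * g (a n) := by
  rw [restrict_atomicMeasure hS hF, integral_finsetSum_measure fun n _ =>
    (integrable_dirac (by simp)).smul_measure (hc n)]
  simp [integral_smul_measure]

theorem setIntegral_atomicMeasure_ofReal_sub [MeasurableSingletonClass α] (Δ : ℕ → ℝ)
    (hS : MeasurableSet S) (hF : ∀ n, a n ∈ S ↔ n ∈ F) (g : α → ℝ) :
    ∫ x in S, g x ∂atomicMeasure a (fun n => .ofReal (Δ n))
      - ∫ x in S, g x ∂atomicMeasure a (fun n => .ofReal (-Δ n)) = ∑ n ∈ F, Δ n * g (a n) := by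
  rw [setIntegral_atomicMeasure (by simp) hS hF, setIntegral_atomicMeasure (by simp) hS hF,
    ← Finset.sum_sub_distrib]
  simp only [ENNReal.toReal_ofReal', ← sub_mul, max_zero_sub_max_neg_zero_eq_self]

end AtomicMeasure

namespace IsTimeGrid

variable {T : ℕ → ℝ} (hT : IsTimeGrid T) {d : ℕ}

include hT in
theorem atomicMeasure_Icc_zero_lt_top {c : ℕ → ℝ≥0∞} (hc : ∀ n, c n ≠ ∞) (t : ℝ) :
    atomicMeasure (fun n => T (n + 1)) c (Icc 0 t) < ∞ := by
  have hsub : Icc 0 t ⊆ Ioc (-1) t := fun τ hτ => ⟨by linarith [hτ.1], hτ.2⟩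
  refine (measure_mono hsub).trans_lt ?_
  rw [atomicMeasure_apply measurableSet_Ioc fun _ => hT.T_succ_mem_Ioc_iff]
  exact ENNReal.sum_lt_top.2 fun n _ => (hc n).lt_top

def stepMeasureData (p : ℕ → Euc d) : BVMeasureData d (p ∘ hT.index) where
  pos i := atomicMeasure (fun n => T (n + 1)) fun n => .ofReal ((p (n + 1) - p n) i)
  neg i := atomicMeasure (fun n => T (n + 1)) fun n => .ofReal (-(p (n + 1) - p n) i)
  var := atomicMeasure (fun n => T (n + 1)) fun n => edist (p n) (p (n + 1))
  pos_fin _ := hT.atomicMeasure_Icc_zero_lt_top fun _ => ENNReal.ofReal_ne_top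
  neg_fin _ := hT.atomicMeasure_Icc_zero_lt_top fun _ => ENNReal.ofReal_ne_top
  increments i s t _ hst := by
    have h := setIntegral_atomicMeasure_ofReal_sub (fun n => (p (n + 1) - p n) i)
      measurableSet_Ioc (fun _ => hT.T_succ_mem_Ioc_iff (s := s) (t := t)) fun _ => (1 : ℝ)
    simp only [setIntegral_const, smul_eq_mul, mul_one, measureReal_def] at h
    rw [h, Function.comp_apply, Function.comp_apply,
      ← Finset.sum_Ico_sub (fun n => p n i) (hT.index_mono hst)]
    simp only [PiLp.sub_apply]
  var_eq s t _ hst := by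
    rw [atomicMeasure_apply measurableSet_Ioc fun _ => hT.T_succ_mem_Ioc_iff,
      hT.eVariationOn_comp_index p hst]

theorem pairing_stepMeasureData (p : ℕ → Euc d) (f : ℝ → Euc d) (s t : ℝ) :
    (hT.stepMeasureData p).pairing f s t =
      ∑ n ∈ Finset.Ico (hT.index s) (hT.index t), ⟪f (T (n + 1)), p (n + 1) - p n⟫ := by
  simp only [BVMeasureData.pairing, stepMeasureData, setIntegral_atomicMeasure_ofReal_sub _
    measurableSet_Ioc (fun _ => hT.T_succ_mem_Ioc_iff), PiLp.inner_apply]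
  rw [Finset.sum_comm]
  simp

theorem isAssociated_stepMeasureData {D : Set (Euc d)} {x p : ℕ → Euc d} (hp₀ : p 0 = 0)
    (hflat : ∀ n, x (n + 1) ∈ D → p (n + 1) = p n)
    (hnormal : ∀ n, ∀ z ∈ closure D, 0 ≤ ⟪z - x (n + 1), p (n + 1) - p n⟫) :
    IsAssociated D (x ∘ hT.index) (p ∘ hT.index) (hT.stepMeasureData p) where
  rightCont := hT.rightContinuousOnNonneg_comp_index p
  leftLim := hT.hasLeftLimitsOnPos_comp_index p
  bv t ht := by
    rw [hT.eVariationOn_comp_index p ht]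
    exact ENNReal.sum_lt_top.2 fun _ _ => edist_lt_top _ _
  init := by rw [Function.comp_apply, ← hT.zero, hT.index_T, hp₀]
  carried := atomicMeasure_apply_eq_zero fun n hn => by
    rw [hflat n (by simpa [hT.index_T] using hn.2), edist_self]
  normal η _ hη s t _ _ := by
    rw [pairing_stepMeasureData]
    refine Finset.sum_nonneg fun n _ => ?_
    have hT_nonneg : 0 ≤ T (n + 1) := hT.zero ▸ hT.strictMono.monotone (Nat.zero_le _)
    simpa [hT.index_T] using hnormal n _ (hη _ hT_nonneg)

end IsTimeGrid

section Reflection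

variable {E : Type*} [AddCommGroup E] (π : E → E) (w : ℝ → E) (T : ℕ → ℝ)

def reflectedSeq : ℕ → E
  | 0 => w 0
  | n + 1 => π (reflectedSeq n + (w (T (n + 1)) - w (T n)))

def pushSeq (n : ℕ) : E :=
  reflectedSeq π w T n - w (T n)

variable {π w T} {K : Set E}

theorem pushSeq_succ_sub (n : ℕ) :
    pushSeq π w T (n + 1) - pushSeq π w T n =
      π (reflectedSeq π w T n + (w (T (n + 1)) - w (T n)))
        - (reflectedSeq π w T n + (w (T (n + 1)) - w (T n))) := by
  simp only [pushSeq, reflectedSeq]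
  abel

theorem pushSeq_zero (hT₀ : T 0 = 0) : pushSeq π w T 0 = 0 := by
  simp [pushSeq, reflectedSeq, hT₀]

theorem reflectedSeq_mem (hπK : ∀ y, π y ∈ K) (hw₀ : w 0 ∈ K) (n : ℕ) :
    reflectedSeq π w T n ∈ K := by
  cases n with
  | zero => exact hw₀
  | succ n => exact hπK _

end Reflection

section Projection

variable {E : Type*} [NormedAddCommGroup E] [InnerProductSpace ℝ E] {π : E → E} {w : ℝ → E}
  {T : ℕ → ℝ} {K : Set E} (hπ : ∀ y, ∀ z ∈ K, ⟪y - π y, z - π y⟫ ≤ 0)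
include hπ

theorem pushSeq_succ_eq_of_mem_interior {n : ℕ} (h : reflectedSeq π w T (n + 1) ∈ interior K) :
    pushSeq π w T (n + 1) = pushSeq π w T n := by
  rw [← sub_eq_zero, pushSeq_succ_sub, sub_eq_zero]
  exact eq_of_forall_inner_sub_nonpos_of_mem_interior h (hπ _)

theorem inner_pushSeq_succ_sub_nonneg (n : ℕ) {z : E} (hz : z ∈ K) :
    0 ≤ ⟪z - reflectedSeq π w T (n + 1), pushSeq π w T (n + 1) - pushSeq π w T n⟫ := by
  rw [pushSeq_succ_sub, real_inner_comm, ← neg_sub, inner_neg_left]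
  exact neg_nonneg.2 (hπ _ z hz)

end Projection

/-- **Lemma 4.1.1.** If `D ⊆ ℝ^d` is a nonempty convex open set and `w` is a step function
with `w(0) ∈ closure D`, then the Skorohod equation `X = w + φ` has a solution. -/
theorem skorohod_exists_of_step {d : ℕ} (D : Set (Euc d)) (hne : D.Nonempty)
    (hconv : Convex ℝ D) (hopen : IsOpen D) (w : ℝ → Euc d)
    (hstep : IsStepFunction w) (hw0 : w 0 ∈ closure D) :
    ∃ (X φ : ℝ → Euc d) (M : BVMeasureData d φ), IsSkorohodSolution D w X φ M := by
  obtain ⟨T, hmono, hT₀, htop, hwT⟩ := hstep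
  have hT : IsTimeGrid T := ⟨hmono, hT₀, htop⟩
  have hproj (y : Euc d) : ∃ v ∈ closure D, ∀ z ∈ closure D, ⟪y - v, z - v⟫ ≤ 0 := by
    obtain ⟨v, hv, hmin⟩ := exists_norm_eq_iInf_of_complete_convex hne.closure
      isClosed_closure.isComplete hconv.closure y
    exact ⟨v, hv, (norm_eq_iInf_iff_real_inner_le_zero hconv.closure hv).1 hmin⟩
  choose π hπK hπ using hproj
  have hD : D ⊆ interior (closure D) := hopen.subset_interior_iff.2 subset_closure
  refine ⟨reflectedSeq π w T ∘ hT.index, pushSeq π w T ∘ hT.index, hT.stepMeasureData _,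
    hT.rightContinuousOnNonneg_comp_index _, hT.hasLeftLimitsOnPos_comp_index _,
    fun _ _ => reflectedSeq_mem hπK hw0 _, fun t ht => ?_,
    hT.isAssociated_stepMeasureData (pushSeq_zero hT₀)
      (fun _ h => pushSeq_succ_eq_of_mem_interior hπ (hD h))
      (fun n _ hz => inner_pushSeq_succ_sub_nonneg hπ n hz)⟩
  have hw : w t = w (T (hT.index t)) :=
    hwT _ t ⟨hT.T_index_le ht, hT.lt_T_index_succ t⟩
  simp [pushSeq, hw]
end
end

section
/- Let D be a nonempty convex open set in ℝ^d, let w, w̃ : [0,∞) → ℝ^d be right-continuous with left limits with w(0), w̃(0) ∈ D̄, and let (X, φ) and (X̃, φ̃) be solutions of the Skorohod equations X = w + φ and X̃ = w̃ + φ̃ respectively. Then for all t ≥ 0: |X(t) − X̃(t)|² ≤ |w(t) − w̃(t)|² + 2 ∫_{(0,t]} ⟨w(t) − w̃(t) − w(s) + w̃(s), dφ(s) − dφ̃(s)⟩. -/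
/-!
Write `ψ = φ - φ'` and `a = w t - w' t`, so that `X t - X' t = a + ψ t`. For a finite signed
measure `m` on `(0, t]` with distribution function `F`, `m (0, t] ^ 2 ≤ 2 ∫ F dm`: the two
sides differ by the sum of the squared atoms of `m`. Applied coordinatewise to `dψ` this gives
`‖a + ψ t‖² ≤ ‖a‖² + 2 ∫ ⟨a + ψ s, dψ s⟩`, and on `(0, t]` the integrand splits as
`(w t - w' t - w s + w' s) + (X s - X' s)`. It remains to see `∫ ⟨X - X', dφ - dφ'⟩ ≤ 0`,
which is the normality condition of `φ` tested against `X'` and that of `φ'` tested against `X`.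
These test functions are only right-continuous with left limits, but their right averages
`s ↦ ⨍ u in s..s + h, X u` are continuous, stay in the closed convex set `closure D`, and
converge boundedly to them as `h → 0⁺`.
-/

open MeasureTheory Set Filter Topology
open scoped RealInnerProductSpace

noncomputable section

section RightContinuous

structure IsRcll {E : Type*} [TopologicalSpace E] (f : ℝ → E) : Prop where
  rightCont : RightContinuousOnNonneg f
  leftLim : HasLeftLimitsOnPos f

variable {E : Type*}

theorem IsRcll.sub [TopologicalSpace E] [Sub E] [ContinuousSub E] {f g : ℝ → E}
    (hf : IsRcll f) (hg : IsRcll g) : IsRcll fun s => f s - g s where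
  rightCont t ht := (hf.rightCont t ht).sub (hg.rightCont t ht)
  leftLim t ht :=
    let ⟨L, hL⟩ := hf.leftLim t ht
    let ⟨L', hL'⟩ := hg.leftLim t ht
    ⟨L - L', hL.sub hL'⟩

theorem IsRcll.const_add [TopologicalSpace E] [Add E] [ContinuousAdd E] {f : ℝ → E}
    (hf : IsRcll f) (a : E) : IsRcll fun s => a + f s where
  rightCont t ht := (hf.rightCont t ht).const_add a
  leftLim t ht :=
    let ⟨L, hL⟩ := hf.leftLim t ht
    ⟨a + L, hL.const_add a⟩

theorem RightContinuousOnNonneg.continuousWithinAt_comp_projIcc [TopologicalSpace E]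
    {f : ℝ → E} (hf : RightContinuousOnNonneg f) {t : ℝ} (ht : 0 ≤ t) (s : ℝ) :
    ContinuousWithinAt (fun u => f (projIcc 0 t ht u)) (Ici s) s :=
  ContinuousWithinAt.comp (f := fun u => (projIcc 0 t ht u : ℝ)) (hf _ (projIcc 0 t ht s).2.1)
    (continuous_subtype_val.comp continuous_projIcc).continuousWithinAt
    fun _ hu => monotone_projIcc ht (mem_Ici.1 hu)

theorem measurable_of_forall_continuousWithinAt_Ici [TopologicalSpace E]
    [TopologicalSpace.PseudoMetrizableSpace E] [MeasurableSpace E] [BorelSpace E] {f : ℝ → E}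
    (hf : ∀ s, ContinuousWithinAt f (Ici s) s) : Measurable f := by
  -- `f` is the pointwise limit of `s ↦ f (⌈(n + 1) s⌉ / (n + 1))`, which factors through `ℤ`
  set r : ℕ → ℝ → ℝ := fun n s => ⌈(n + 1) * s⌉ / (n + 1)
  have hr : ∀ n s, s ≤ r n s ∧ r n s ≤ s + 1 / (n + 1) := fun n s => by
    have hn : (0 : ℝ) < n + 1 := by positivity
    refine ⟨(le_div_iff₀ hn).2 ?_, (div_le_iff₀ hn).2 ?_⟩
    · linarith [Int.le_ceil ((n + 1) * s)]
    · calc (⌈(n + 1) * s⌉ : ℝ) ≤ (n + 1) * s + 1 := (Int.ceil_lt_add_one _).le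
        _ = (s + 1 / (n + 1)) * (n + 1) := by field_simp
  refine measurable_of_tendsto_metrizable (f := fun n s => f (r n s)) (fun n => ?_)
    (tendsto_pi_nhds.2 fun s => (hf s).tendsto.comp ?_)
  · exact (measurable_from_top (f := fun k : ℤ => f (k / (n + 1)))).comp
      (Int.measurable_ceil.comp (measurable_const_mul _))
  · refine tendsto_nhdsWithin_of_tendsto_nhds_of_eventually_within _ ?_
      (Eventually.of_forall fun n => (hr n s).1)
    have hupper := tendsto_const_nhds (x := s) |>.add (tendsto_one_div_add_atTop_nhds_zero_nat)
    rw [add_zero] at hupper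
    exact tendsto_of_tendsto_of_tendsto_of_le_of_le tendsto_const_nhds hupper
      (fun n => (hr n s).1) (fun n => (hr n s).2)

theorem IsCompact.isBounded_image_of_forall_exists_mem_nhdsWithin {X α : Type*}
    [TopologicalSpace X] [Bornology α] {K : Set X} (hK : IsCompact K) {f : X → α}
    (hf : ∀ x ∈ K, ∃ U ∈ 𝓝[K] x, Bornology.IsBounded (f '' U)) :
    Bornology.IsBounded (f '' K) :=
  hK.induction_on (by simp) (fun _ _ hUV hV => hV.subset (image_mono hUV))
    (fun _ _ hU hV => by rw [image_union]; exact hU.union hV) hf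

theorem IsRcll.isBounded_image_Icc [PseudoMetricSpace E] {f : ℝ → E} (hf : IsRcll f) (t : ℝ) :
    Bornology.IsBounded (f '' Icc 0 t) := by
  refine isCompact_Icc.isBounded_image_of_forall_exists_mem_nhdsWithin fun x hx => ?_
  obtain ⟨V, hV, hVb⟩ := Metric.exists_isBounded_image_of_tendsto (hf.rightCont x hx.1)
  rcases hx.1.eq_or_lt with rfl | hx0
  · exact ⟨V, nhdsWithin_mono _ Icc_subset_Ici_self hV, hVb⟩
  · obtain ⟨L, hL⟩ := hf.leftLim x hx0
    obtain ⟨U, hU, hUb⟩ := Metric.exists_isBounded_image_of_tendsto hL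
    refine ⟨U ∪ V, mem_nhdsWithin_of_mem_nhds ?_, by rw [image_union]; exact hUb.union hVb⟩
    rw [← nhdsLT_sup_nhdsGE]
    exact union_mem_sup hU hV

theorem IsRcll.integrableOn_Ioc [NormedAddCommGroup E] [MeasurableSpace E] [BorelSpace E]
    [SecondCountableTopology E] {f : ℝ → E} (hf : IsRcll f) {μ : Measure ℝ} {t : ℝ}
    (hμ : μ (Ioc 0 t) ≠ ⊤) : IntegrableOn f (Ioc 0 t) μ := by
  rcases lt_or_ge t 0 with ht | ht
  · simp [Ioc_eq_empty_of_le ht.le]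
  obtain ⟨B, hB⟩ := isBounded_iff_forall_norm_le.1 (hf.isBounded_image_Icc t)
  have hm : Measurable fun u => f (projIcc 0 t ht u) :=
    measurable_of_forall_continuousWithinAt_Ici (hf.rightCont.continuousWithinAt_comp_projIcc ht)
  refine (Measure.integrableOn_of_bounded hμ hm.aestronglyMeasurable (M := B)
    (ae_of_all _ fun u => hB _ (mem_image_of_mem _ (projIcc 0 t ht u).2))).congr_fun
    (fun u hu => by simp [projIcc_of_mem ht (Ioc_subset_Icc_self hu)]) measurableSet_Ioc

end RightContinuous

namespace BVMeasureData

variable {d : ℕ} {φ : ℝ → Euc d} (M : BVMeasureData d φ)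

instance (i : Fin d) (t : ℝ) : IsFiniteMeasure ((M.pos i).restrict (Ioc 0 t)) :=
  ⟨by simpa using (measure_mono Ioc_subset_Icc_self).trans_lt (M.pos_fin i t)⟩

instance (i : Fin d) (t : ℝ) : IsFiniteMeasure ((M.neg i).restrict (Ioc 0 t)) :=
  ⟨by simpa using (measure_mono Ioc_subset_Icc_self).trans_lt (M.neg_fin i t)⟩

theorem measureReal_pos_sub_neg (h0 : φ 0 = 0) (i : Fin d) {v : ℝ} (hv : 0 ≤ v) :
    (M.pos i).real (Ioc 0 v) - (M.neg i).real (Ioc 0 v) = φ v i := by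
  simpa [measureReal_def, h0] using M.increments i 0 v le_rfl hv

theorem pairing_congr {f g : ℝ → Euc d} {s t : ℝ} (h : EqOn f g (Ioc s t)) :
    M.pairing f s t = M.pairing g s t := by
  simp only [pairing]
  refine Finset.sum_congr rfl fun i _ => ?_
  rw [setIntegral_congr_fun measurableSet_Ioc fun τ hτ => congrArg (· i) (h hτ),
    setIntegral_congr_fun measurableSet_Ioc fun τ hτ => congrArg (· i) (h hτ)]

theorem pairing_neg (f : ℝ → Euc d) (s t : ℝ) :
    M.pairing (fun τ => -f τ) s t = -M.pairing f s t := by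
  simp only [pairing, PiLp.neg_apply, integral_neg, ← Finset.sum_neg_distrib, neg_sub_neg,
    neg_sub]

def PairingIntegrable (f : ℝ → Euc d) (s t : ℝ) : Prop :=
  ∀ i, IntegrableOn f (Ioc s t) (M.pos i) ∧ IntegrableOn f (Ioc s t) (M.neg i)

theorem pairing_sub {f g : ℝ → Euc d} {s t : ℝ} (hf : M.PairingIntegrable f s t)
    (hg : M.PairingIntegrable g s t) :
    M.pairing (fun τ => f τ - g τ) s t = M.pairing f s t - M.pairing g s t := by
  simp only [pairing, PiLp.sub_apply, ← Finset.sum_sub_distrib]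
  refine Finset.sum_congr rfl fun i _ => ?_
  rw [integral_sub ((hf i).1.eval_piLp i) ((hg i).1.eval_piLp i),
    integral_sub ((hf i).2.eval_piLp i) ((hg i).2.eval_piLp i)]
  ring

theorem tendsto_pairing {ι : Type*} {l : Filter ι} [l.IsCountablyGenerated]
    {F : ι → ℝ → Euc d} {f : ℝ → Euc d} {B t : ℝ}
    (hF_meas : ∀ᶠ n in l, StronglyMeasurable (F n))
    (hF_bound : ∀ᶠ n in l, ∀ τ ∈ Ioc 0 t, ‖F n τ‖ ≤ B)
    (hF_lim : ∀ τ ∈ Ioc 0 t, Tendsto (fun n => F n τ) l (𝓝 (f τ))) :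
    Tendsto (fun n => M.pairing (F n) 0 t) l (𝓝 (M.pairing f 0 t)) := by
  have hcoord (i : Fin d) : Continuous fun x : Euc d => x i := by fun_prop
  have key : ∀ (μ : Measure ℝ) [IsFiniteMeasure (μ.restrict (Ioc 0 t))] (i : Fin d),
      Tendsto (fun n => ∫ τ in Ioc 0 t, F n τ i ∂μ) l
        (𝓝 (∫ τ in Ioc 0 t, f τ i ∂μ)) :=
    fun μ _ i => tendsto_integral_filter_of_dominated_convergence (fun _ => B)
      (hF_meas.mono fun n hn => ((hcoord i).comp_stronglyMeasurable hn).aestronglyMeasurable)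
      (hF_bound.mono fun n hn => (ae_restrict_mem measurableSet_Ioc).mono fun τ hτ =>
        ((PiLp.norm_apply_le (F n τ) i).trans (hn τ hτ)))
      (integrable_const B)
      ((ae_restrict_mem measurableSet_Ioc).mono fun τ hτ =>
        ((hcoord i).tendsto _).comp (hF_lim τ hτ))
  exact tendsto_finsetSum _ fun i _ => (key (M.pos i) i).sub (key (M.neg i) i)

end BVMeasureData

theorem IsRcll.pairingIntegrable {d : ℕ} {f φ : ℝ → Euc d} (hf : IsRcll f)
    (M : BVMeasureData d φ) (t : ℝ) : M.PairingIntegrable f 0 t := fun i =>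
  ⟨hf.integrableOn_Ioc ((measure_mono Ioc_subset_Icc_self).trans_lt (M.pos_fin i t)).ne,
    hf.integrableOn_Ioc ((measure_mono Ioc_subset_Icc_self).trans_lt (M.neg_fin i t)).ne⟩

section IntervalAverage

variable {E : Type*} [NormedAddCommGroup E] [NormedSpace ℝ E] {f : ℝ → E}

theorem continuous_intervalAverage_add (hf : LocallyIntegrable f) (h : ℝ) :
    Continuous fun s => ⨍ u in s..s + h, f u := by
  have hii : ∀ a b, IntervalIntegrable f volume a b := fun _ _ =>
    (hf.integrableOn_isCompact isCompact_uIcc).intervalIntegrable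
  have hK := intervalIntegral.continuous_primitive hii 0
  have hK_sub : (fun s => ⨍ u in s..s + h, f u) =
      fun s => h⁻¹ • ((∫ u in (0)..s + h, f u) - ∫ u in (0)..s, f u) := by
    funext s
    rw [interval_average_eq, add_sub_cancel_left,
      intervalIntegral.integral_interval_sub_left (hii _ _) (hii _ _)]
  rw [hK_sub]
  fun_prop

theorem tendsto_intervalAverage_add_nhdsGT [CompleteSpace E] (hf : LocallyIntegrable f) {s : ℝ}
    (hfs : ContinuousWithinAt f (Ici s) s) :
    Tendsto (fun h => ⨍ u in s..s + h, f u) (𝓝[>] 0) (𝓝 (f s)) := by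
  have hderiv : HasDerivWithinAt (fun u => ∫ x in s..u, f x) (f s) (Ici s) s :=
    intervalIntegral.integral_hasDerivWithinAt_right IntervalIntegrable.refl
      hf.aestronglyMeasurable.stronglyMeasurableAtFilter (hfs.mono Ioi_subset_Ici_self)
  have hshift : Tendsto (fun h => s + h) (𝓝[>] 0) (𝓝[Ici s \ {s}] s) := by
    rw [Ici_sdiff_left]
    refine tendsto_nhdsWithin_of_tendsto_nhds_of_eventually_within _ ?_ ?_
    · simpa using ((continuous_const_add s).tendsto 0).mono_left nhdsWithin_le_nhds
    · filter_upwards [self_mem_nhdsWithin] with h hh using lt_add_of_pos_right s hh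
  refine (hasDerivWithinAt_iff_tendsto_slope.1 hderiv |>.comp hshift).congr fun h => ?_
  simp [slope_def_module, interval_average_eq]

theorem Convex.intervalAverage_mem [CompleteSpace E] {C : Set E} (hC : Convex ℝ C)
    (hCc : IsClosed C) {a b : ℝ} (hf : IntervalIntegrable f volume a b) (hfC : ∀ u, f u ∈ C)
    (hab : a ≠ b) :
    ⨍ u in a..b, f u ∈ C :=
  hC.set_average_mem hCc (by simpa [sub_eq_zero, eq_comm] using hab) (by simp)
    (ae_of_all _ fun u => hfC u) hf.def'

end IntervalAverage

theorem IsAssociated.pairing_nonneg_of_isRcll {d : ℕ} {D : Set (Euc d)} (hconv : Convex ℝ D)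
    {X φ : ℝ → Euc d} {M : BVMeasureData d φ} (hA : IsAssociated D X φ M) (hX : IsRcll X)
    {Y : ℝ → Euc d} (hY : IsRcll Y) (hYD : ∀ s, 0 ≤ s → Y s ∈ closure D) {t : ℝ}
    (ht : 0 ≤ t) :
    0 ≤ M.pairing (fun τ => Y τ - X τ) 0 t := by
  set Yc : ℝ → Euc d := fun u => Y (projIcc 0 t ht u)
  set Xc : ℝ → Euc d := fun u => X (projIcc 0 t ht u)
  have hYc : EqOn Y Yc (Ioc 0 t) := fun u hu => by
    simp [Yc, projIcc_of_mem ht (Ioc_subset_Icc_self hu)]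
  have hXc : EqOn X Xc (Ioc 0 t) := fun u hu => by
    simp [Xc, projIcc_of_mem ht (Ioc_subset_Icc_self hu)]
  have hYc_cont := hY.rightCont.continuousWithinAt_comp_projIcc ht
  have hYc_meas : Measurable Yc := measurable_of_forall_continuousWithinAt_Ici hYc_cont
  have hXc_meas : Measurable Xc := measurable_of_forall_continuousWithinAt_Ici
    (hX.rightCont.continuousWithinAt_comp_projIcc ht)
  obtain ⟨B, hB⟩ := isBounded_iff_forall_norm_le.1 (hY.isBounded_image_Icc t)
  obtain ⟨B', hB'⟩ := isBounded_iff_forall_norm_le.1 (hX.isBounded_image_Icc t)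
  have hYc_mem : ∀ u, Yc u ∈ closure D ∩ Metric.closedBall 0 B := fun u =>
    ⟨hYD _ (projIcc 0 t ht u).2.1,
      mem_closedBall_zero_iff.2 (hB _ (mem_image_of_mem _ (projIcc 0 t ht u).2))⟩
  have hYc_int : LocallyIntegrable Yc := locallyIntegrable_iff.2 fun K hK =>
    Measure.integrableOn_of_bounded hK.measure_lt_top.ne hYc_meas.aestronglyMeasurable
      (ae_of_all _ fun u => mem_closedBall_zero_iff.1 (hYc_mem u).2)
  set η : ℝ → ℝ → Euc d := fun h s => ⨍ u in s..s + h, Yc u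
  have hη_mem : ∀ h > 0, ∀ s, η h s ∈ closure D ∩ Metric.closedBall 0 B := fun h hh s =>
    (hconv.closure.inter (convex_closedBall 0 B)).intervalAverage_mem
      (isClosed_closure.inter Metric.isClosed_closedBall)
      ((hYc_int.integrableOn_isCompact isCompact_uIcc).intervalIntegrable) hYc_mem
      (by linarith)
  have hlim : Tendsto (fun h => M.pairing (fun τ => η h τ - Xc τ) 0 t) (𝓝[>] 0)
      (𝓝 (M.pairing (fun τ => Y τ - X τ) 0 t)) := by
    refine M.tendsto_pairing (B := B + B') ?_ ?_ fun τ hτ => ?_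
    · exact Eventually.of_forall fun h =>
        ((continuous_intervalAverage_add hYc_int h).measurable.sub hXc_meas).stronglyMeasurable
    · filter_upwards [self_mem_nhdsWithin] with h hh τ hτ
      refine (norm_sub_le _ _).trans (add_le_add (mem_closedBall_zero_iff.1 (hη_mem h hh τ).2) ?_)
      rw [← hXc hτ]
      exact hB' _ (mem_image_of_mem _ (Ioc_subset_Icc_self hτ))
    · rw [hYc hτ, hXc hτ]
      exact (tendsto_intervalAverage_add_nhdsGT hYc_int (hYc_cont τ)).sub_const _
  refine ge_of_tendsto hlim ?_
  filter_upwards [self_mem_nhdsWithin] with h hh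
  rw [← M.pairing_congr fun τ hτ => congrArg (η h τ - ·) (hXc hτ)]
  exact hA.normal (η h) (continuous_intervalAverage_add hYc_int h)
    (fun s _ => (hη_mem h hh s).1) 0 t le_rfl ht

section SignedMeasure

variable {α : Type*} [LinearOrder α] [TopologicalSpace α] [OrderClosedTopology α]
  [MeasurableSpace α] [BorelSpace α]

theorem integrable_measureReal_Iic (μ ν : Measure α) [IsFiniteMeasure μ] [IsFiniteMeasure ν] :
    Integrable (fun v => μ.real (Iic v)) ν := by
  have hmono : Monotone fun v => μ.real (Iic v) := fun _ _ h =>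
    measureReal_mono (Iic_subset_Iic.2 h)
  refine .of_bound hmono.measurable.aestronglyMeasurable (μ.real univ) (ae_of_all _ fun v => ?_)
  rw [Real.norm_of_nonneg measureReal_nonneg]
  exact measureReal_mono (subset_univ _)

variable [SecondCountableTopology α]

theorem sq_integral_le_two_mul_integral_mul_setIntegral_Iic (ρ : Measure α) [IsFiniteMeasure ρ]
    {γ : α → ℝ} (hγ : Integrable γ ρ) :
    (∫ v, γ v ∂ρ) ^ 2 ≤ 2 * ∫ v, γ v * ∫ u in Iic v, γ u ∂ρ ∂ρ := by
  -- Split `(∫ γ)² = ∬ γ u γ v` along `{u ≤ v}` and `{v < u}`; the two halves differ by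
  -- the diagonal contribution `∫ ρ {v} γ v ²`, which is nonnegative.
  set F : α × α → ℝ := fun p => γ p.1 * γ p.2
  have hF : Integrable F (ρ.prod ρ) := hγ.mul_prod hγ
  set S : Set (α × α) := {p | p.1 ≤ p.2}
  have hS : MeasurableSet S := measurableSet_le measurable_fst measurable_snd
  have hS_sect : ∀ v, (fun u => S.indicator F (u, v)) = (Iic v).indicator fun u => γ u * γ v :=
    fun v => funext fun u => by simp [S, F, indicator_apply]
  have hSc_sect :
      ∀ u, (fun v => Sᶜ.indicator F (u, v)) = (Iio u).indicator fun v => γ u * γ v :=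
    fun u => funext fun v => by simp [S, F, indicator_apply]
  have hlower : ∀ v, ∫ u, S.indicator F (u, v) ∂ρ = γ v * ∫ u in Iic v, γ u ∂ρ :=
    fun v => by
    rw [hS_sect, integral_indicator measurableSet_Iic, integral_mul_const, mul_comm]
  have hupper : ∀ u, ∫ v, Sᶜ.indicator F (u, v) ∂ρ = γ u * ∫ v in Iio u, γ v ∂ρ :=
    fun u => by
    rw [hSc_sect, integral_indicator measurableSet_Iio, integral_const_mul]
  have hFS := hF.indicator hS
  have hFSc := hF.indicator hS.compl
  have hsum : (∫ v, γ v ∂ρ) ^ 2 =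
      (∫ v, γ v * ∫ u in Iic v, γ u ∂ρ ∂ρ) +
        ∫ u, γ u * ∫ v in Iio u, γ v ∂ρ ∂ρ := by
    rw [sq, ← integral_prod_mul, ← integral_add_compl hS hF, ← integral_indicator hS,
      ← integral_indicator hS.compl, integral_prod_symm _ hFS, integral_prod _ hFSc]
    simp only [hlower, hupper, F]
  have hdiag : ∀ v, γ v * ∫ u in Iio v, γ u ∂ρ ≤ γ v * ∫ u in Iic v, γ u ∂ρ :=
    fun v => by
    rw [← Iio_union_right, setIntegral_union (by simp) (measurableSet_singleton v)
      hγ.integrableOn hγ.integrableOn, integral_singleton, mul_add, smul_eq_mul]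
    nlinarith [mul_self_nonneg (γ v), measureReal_nonneg (μ := ρ) (s := {v})]
  have hmono := integral_mono (hFSc.integral_prod_left.congr (ae_of_all _ hupper))
    (hFS.integral_prod_right.congr (ae_of_all _ hlower)) hdiag
  linarith

theorem sq_add_measureReal_sub_le (μ ν : Measure α) [IsFiniteMeasure μ] [IsFiniteMeasure ν]
    (a : ℝ) : (a + (μ.real univ - ν.real univ)) ^ 2 ≤ a ^ 2 + 2 *
      ((∫ v, a + (μ.real (Iic v) - ν.real (Iic v)) ∂μ) -
        ∫ v, a + (μ.real (Iic v) - ν.real (Iic v)) ∂ν) := by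
  -- Write `μ - ν` as `γ • (μ + ν)` and apply the quadratic inequality to the density `γ`.
  set ρ := μ + ν
  have hμρ : μ ≪ ρ := Measure.absolutelyContinuous_of_le (Measure.le_add_right le_rfl)
  have hνρ : ν ≪ ρ := Measure.absolutelyContinuous_of_le (Measure.le_add_left le_rfl)
  set γ : α → ℝ := fun v => (μ.rnDeriv ρ v).toReal - (ν.rnDeriv ρ v).toReal
  have hγ : Integrable γ ρ :=
    Measure.integrable_toReal_rnDeriv.sub Measure.integrable_toReal_rnDeriv
  have hγ_set : ∀ s, ∫ v in s, γ v ∂ρ = μ.real s - ν.real s := fun s => by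
    rw [integral_sub Measure.integrable_toReal_rnDeriv.integrableOn
      Measure.integrable_toReal_rnDeriv.integrableOn, Measure.setIntegral_toReal_rnDeriv hμρ,
      Measure.setIntegral_toReal_rnDeriv hνρ]
  set F : α → ℝ := fun v => μ.real (Iic v) - ν.real (Iic v)
  have hF : ∀ ρ' : Measure α, [IsFiniteMeasure ρ'] → Integrable F ρ' := fun ρ' _ =>
    (integrable_measureReal_Iic μ ρ').sub (integrable_measureReal_Iic ν ρ')
  have hγF : ∫ v, γ v * F v ∂ρ = ∫ v, F v ∂μ - ∫ v, F v ∂ν := by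
    simp only [γ, sub_mul]
    rw [integral_sub ((integrable_toReal_rnDeriv_mul_iff hμρ).2 (hF μ))
      ((integrable_toReal_rnDeriv_mul_iff hνρ).2 (hF ν)), integral_toReal_rnDeriv_mul hμρ,
      integral_toReal_rnDeriv_mul hνρ]
  have key := sq_integral_le_two_mul_integral_mul_setIntegral_Iic ρ hγ
  have hcdf : (fun v => γ v * ∫ u in Iic v, γ u ∂ρ) = fun v => γ v * F v :=
    funext fun v => by rw [hγ_set]
  rw [← setIntegral_univ, hγ_set, hcdf, hγF] at key
  rw [integral_add (integrable_const a) (hF μ), integral_add (integrable_const a) (hF ν),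
    integral_const, integral_const, smul_eq_mul, smul_eq_mul]
  nlinarith [key]

end SignedMeasure

namespace BVMeasureData

variable {d : ℕ} {φ φ' : ℝ → Euc d}

theorem sq_add_coord_sub_le (M : BVMeasureData d φ) (M' : BVMeasureData d φ') (hφ0 : φ 0 = 0)
    (hφ'0 : φ' 0 = 0) (a : ℝ) (i : Fin d) {t : ℝ} (ht : 0 ≤ t) :
    (a + (φ t i - φ' t i)) ^ 2 ≤ a ^ 2 + 2 *
      (((∫ s in Ioc 0 t, a + (φ s i - φ' s i) ∂M.pos i) -
          ∫ s in Ioc 0 t, a + (φ s i - φ' s i) ∂M.neg i) -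
        ((∫ s in Ioc 0 t, a + (φ s i - φ' s i) ∂M'.pos i) -
          ∫ s in Ioc 0 t, a + (φ s i - φ' s i) ∂M'.neg i)) := by
  -- On `(0, t]`, `d(φᵢ - φ'ᵢ) = μ - ν` with the finite measures below.
  set I := Ioc (0 : ℝ) t
  set μ := (M.pos i).restrict I + (M'.neg i).restrict I
  set ν := (M.neg i).restrict I + (M'.pos i).restrict I
  have hIic : ∀ v ∈ Icc 0 t, ∀ N : Measure ℝ,
      (N.restrict I).real (Iic v) = N.real (Ioc 0 v) :=
    fun v hv N => by
      rw [measureReal_restrict_apply measurableSet_Iic, inter_comm, Ioc_inter_Iic,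
        min_eq_right hv.2]
  have hcdf : ∀ v ∈ Icc 0 t, μ.real (Iic v) - ν.real (Iic v) = φ v i - φ' v i := by
    intro v hv
    rw [measureReal_add_apply, measureReal_add_apply, hIic v hv, hIic v hv, hIic v hv, hIic v hv,
      ← M.measureReal_pos_sub_neg hφ0 i hv.1, ← M'.measureReal_pos_sub_neg hφ'0 i hv.1]
    ring
  have htot : μ.real univ - ν.real univ = φ t i - φ' t i := by
    rw [← hcdf t ⟨ht, le_rfl⟩, measureReal_add_apply, measureReal_add_apply,
      measureReal_add_apply, measureReal_add_apply]
    simp only [measureReal_restrict_apply_univ, hIic t ⟨ht, le_rfl⟩]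
    rfl
  set G : ℝ → ℝ := fun v => a + (μ.real (Iic v) - ν.real (Iic v))
  have hG_int : ∀ ρ : Measure ℝ, [IsFiniteMeasure ρ] → Integrable G ρ := fun ρ _ =>
    (integrable_const a).add
      ((integrable_measureReal_Iic μ ρ).sub (integrable_measureReal_Iic ν ρ))
  have hG_eq : ∀ N : Measure ℝ, ∫ s in I, G s ∂N = ∫ s in I, a + (φ s i - φ' s i) ∂N :=
    fun N => setIntegral_congr_fun measurableSet_Ioc fun s hs => by
      simp only [G, hcdf s (Ioc_subset_Icc_self hs)]
  have key := sq_add_measureReal_sub_le μ ν a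
  rw [htot, integral_add_measure (hG_int _) (hG_int _), integral_add_measure (hG_int _)
    (hG_int _), hG_eq, hG_eq, hG_eq, hG_eq] at key
  linarith

theorem sq_norm_add_sub_le (M : BVMeasureData d φ) (M' : BVMeasureData d φ') (hφ0 : φ 0 = 0)
    (hφ'0 : φ' 0 = 0) (a : Euc d) {t : ℝ} (ht : 0 ≤ t) :
    ‖a + (φ t - φ' t)‖ ^ 2 ≤ ‖a‖ ^ 2 + 2 *
      (M.pairing (fun s => a + (φ s - φ' s)) 0 t -
        M'.pairing (fun s => a + (φ s - φ' s)) 0 t) := by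
  simp only [EuclideanSpace.norm_sq_eq, Real.norm_eq_abs, sq_abs, pairing, PiLp.add_apply,
    PiLp.sub_apply, ← Finset.sum_sub_distrib, Finset.mul_sum, ← Finset.sum_add_distrib]
  exact Finset.sum_le_sum fun i _ => sq_add_coord_sub_le M M' hφ0 hφ'0 (a i) i ht

end BVMeasureData

theorem skorohod_difference_estimate_general {d : ℕ} (D : Set (Euc d))
    (hconv : Convex ℝ D)
    (w w' X X' φ φ' : ℝ → Euc d)
    (M : BVMeasureData d φ) (M' : BVMeasureData d φ')
    (hsol : IsSkorohodSolution D w X φ M) (hsol' : IsSkorohodSolution D w' X' φ' M') :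
    ∀ t : ℝ, 0 ≤ t →
      ‖X t - X' t‖ ^ 2 ≤ ‖w t - w' t‖ ^ 2 +
        2 * (M.pairing (fun s => w t - w' t - w s + w' s) 0 t -
             M'.pairing (fun s => w t - w' t - w s + w' s) 0 t) := by
  intro t ht
  set a := w t - w' t with ha
  have hX : IsRcll X := ⟨hsol.rightCont, hsol.leftLim⟩
  have hX' : IsRcll X' := ⟨hsol'.rightCont, hsol'.leftLim⟩
  have hψ : IsRcll fun s => a + (φ s - φ' s) :=
    (IsRcll.sub ⟨hsol.assoc.rightCont, hsol.assoc.leftLim⟩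
      ⟨hsol'.assoc.rightCont, hsol'.assoc.leftLim⟩).const_add a
  have hsplit : ∀ {χ : ℝ → Euc d} (N : BVMeasureData d χ),
      N.pairing (fun s => a - w s + w' s) 0 t =
        N.pairing (fun s => a + (φ s - φ' s)) 0 t - N.pairing (fun s => X s - X' s) 0 t :=
    fun N => by
      rw [← N.pairing_sub (hψ.pairingIntegrable N t) ((hX.sub hX').pairingIntegrable N t)]
      refine N.pairing_congr fun s hs => ?_
      rw [hsol.eqn s hs.1.le, hsol'.eqn s hs.1.le]
      abel
  have hM : 0 ≤ M.pairing (fun s => X' s - X s) 0 t :=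
    hsol.assoc.pairing_nonneg_of_isRcll hconv hX hX' hsol'.mem ht
  have hM' : 0 ≤ M'.pairing (fun s => X s - X' s) 0 t :=
    hsol'.assoc.pairing_nonneg_of_isRcll hconv hX' hX hsol.mem ht
  have hflip := M.pairing_neg (fun s => X' s - X s) 0 t
  simp only [neg_sub] at hflip
  have hsq := BVMeasureData.sq_norm_add_sub_le M M' hsol.assoc.init hsol'.assoc.init a ht
  have hXt : X t - X' t = a + (φ t - φ' t) := by
    rw [hsol.eqn t ht, hsol'.eqn t ht, ha]
    abel
  rw [hXt, hsplit M, hsplit M']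
  linarith

/-- **Lemma 4.1.2(i).** If `(X, φ)` and `(X̃, φ̃)` solve the Skorohod equations `X = w + φ`
and `X̃ = w̃ + φ̃` for a nonempty convex open `D ⊆ ℝ^d`, then for all `t ≥ 0`,
`|X(t) − X̃(t)|² ≤ |w(t) − w̃(t)|² + 2∫_{(0,t]} ⟨w(t) − w̃(t) − w(s) + w̃(s), dφ(s) − dφ̃(s)⟩`. -/
theorem skorohod_difference_estimate {d : ℕ} (D : Set (Euc d)) (hne : D.Nonempty)
    (hconv : Convex ℝ D) (hopen : IsOpen D)
    (w w' X X' φ φ' : ℝ → Euc d)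
    (hw_rc : RightContinuousOnNonneg w) (hw_ll : HasLeftLimitsOnPos w)
    (hw'_rc : RightContinuousOnNonneg w') (hw'_ll : HasLeftLimitsOnPos w')
    (hw0 : w 0 ∈ closure D) (hw'0 : w' 0 ∈ closure D)
    (M : BVMeasureData d φ) (M' : BVMeasureData d φ')
    (hsol : IsSkorohodSolution D w X φ M) (hsol' : IsSkorohodSolution D w' X' φ' M') :
    ∀ t : ℝ, 0 ≤ t →
      ‖X t - X' t‖ ^ 2 ≤ ‖w t - w' t‖ ^ 2 +
        2 * (M.pairing (fun s => w t - w' t - w s + w' s) 0 t -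
             M'.pairing (fun s => w t - w' t - w s + w' s) 0 t) :=
  skorohod_difference_estimate_general D hconv w w' X X' φ φ' M M' hsol hsol'
end
end

section
/- Let D be a nonempty convex open set in ℝ^d and let w : [0,∞) → ℝ^d be continuous with w(0) ∈ D̄. If (X, φ) is a solution of the Skorohod equation X = w + φ, then X (and hence φ) is continuous on [0,∞). -/
open MeasureTheory Set Filter Topology
open scoped RealInnerProductSpace

noncomputable section

/-!
Right-continuity is part of the hypotheses, so only left-continuity at `t > 0` is at stake.
As `w` is continuous, `X` and `φ` have the same jump at `t`: `X t - X(t-) = φ t - φ(t-)`.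
Testing the normality condition with the constant `η ≡ X(t-) ∈ closure D` on `(s, t]` and
letting `s ↑ t`, the integral concentrates on the atom of `dφ` at `t`, which is that jump; the
limit is `⟪X(t-) - X t, X t - X(t-)⟫ = -‖X t - X(t-)‖² ≥ 0`, so the jump vanishes.
-/

theorem measurable_of_continuousWithinAt_Ici {E : Type*} [TopologicalSpace E]
    [TopologicalSpace.PseudoMetrizableSpace E] [MeasurableSpace E] [BorelSpace E] {g : ℝ → E}
    (hg : ∀ x, ContinuousWithinAt g (Ici x) x) : Measurable g := by
  set r : ℕ → ℝ → ℝ := fun n x => ⌈x * (n + 1)⌉ / (n + 1)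
  refine measurable_of_tendsto_metrizable (f := fun n x => g (r n x)) (fun n => ?_)
    (tendsto_pi_nhds.2 fun x => (hg x).tendsto.comp ?_)
  · exact (Measurable.of_discrete (f := fun k : ℤ => g (k / (n + 1)))).comp
      (Int.measurable_ceil.comp (measurable_id.mul_const _))
  · have hn : ∀ n : ℕ, (0 : ℝ) < n + 1 := fun n => n.cast_add_one_pos
    have hlow : ∀ n, x ≤ r n x := fun n => by
      rw [le_div_iff₀ (hn n)]; exact Int.le_ceil _
    have hup : ∀ n, r n x ≤ x + 1 / (n + 1) := fun n => by
      rw [div_le_iff₀ (hn n), add_mul, one_div_mul_cancel (hn n).ne']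
      exact (Int.ceil_lt_add_one _).le
    have hlim : Tendsto (fun n : ℕ => x + 1 / ((n : ℝ) + 1)) atTop (𝓝 x) := by
      simpa using tendsto_one_div_add_atTop_nhds_zero_nat.const_add x
    exact tendsto_nhdsWithin_iff.2 ⟨tendsto_of_tendsto_of_tendsto_of_le_of_le
      tendsto_const_nhds hlim hlow hup, .of_forall hlow⟩

theorem RightContinuousOnNonneg.measurable_comp_max {E : Type*} [TopologicalSpace E]
    [TopologicalSpace.PseudoMetrizableSpace E] [MeasurableSpace E] [BorelSpace E] {f : ℝ → E}
    (hf : RightContinuousOnNonneg f) : Measurable fun τ => f (max τ 0) :=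
  measurable_of_continuousWithinAt_Ici fun x =>
    (hf _ (le_max_right x 0)).comp (f := fun σ => max σ 0)
      (continuous_id.max continuous_const).continuousWithinAt
      fun _ hy => max_le_max_right 0 (mem_Ici.1 hy)

theorem tendsto_setIntegral_Ioc_of_tendsto_left {E : Type*} [NormedAddCommGroup E]
    [NormedSpace ℝ E] [CompleteSpace E] {μ : Measure ℝ} {f : ℝ → E} {u : ℕ → ℝ} {t : ℝ}
    (hmono : Monotone u) (hut : ∀ n, u n < t) (hu : Tendsto u atTop (𝓝 t))
    (hf : IntegrableOn f (Ioc (u 0) t) μ) :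
    Tendsto (fun n => ∫ τ in Ioc (u n) t, f τ ∂μ) atTop (𝓝 (μ.real {t} • f t)) := by
  have hinter : ⋂ n, Ioc (u n) t = {t} := by
    ext x
    simp only [mem_iInter, mem_Ioc, mem_singleton_iff]
    refine ⟨fun hx => le_antisymm (hx 0).2 (le_of_tendsto' hu fun n => (hx n).1.le), ?_⟩
    rintro rfl
    exact fun n => ⟨hut n, le_rfl⟩
  rw [← integral_singleton, ← hinter]
  exact tendsto_setIntegral_of_antitone (fun _ => measurableSet_Ioc)
    (fun _ _ hmn => Ioc_subset_Ioc_left (hmono hmn)) ⟨0, hf⟩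

namespace BVMeasureData

variable {d : ℕ} {φ : ℝ → Euc d} (M : BVMeasureData d φ)

theorem pos_Ioc_ne_top {s : ℝ} (hs : 0 ≤ s) (i : Fin d) (t : ℝ) : M.pos i (Ioc s t) ≠ ⊤ :=
  ne_top_of_le_ne_top (M.pos_fin i t).ne
    (measure_mono (Ioc_subset_Icc_self.trans (Icc_subset_Icc_left hs)))

theorem neg_Ioc_ne_top {s : ℝ} (hs : 0 ≤ s) (i : Fin d) (t : ℝ) : M.neg i (Ioc s t) ≠ ⊤ :=
  ne_top_of_le_ne_top (M.neg_fin i t).ne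
    (measure_mono (Ioc_subset_Icc_self.trans (Icc_subset_Icc_left hs)))

theorem real_singleton_sub_of_tendsto_left {t : ℝ} (ht : 0 < t) {Lφ : Euc d}
    (hφ : Tendsto φ (𝓝[<] t) (𝓝 Lφ)) (i : Fin d) :
    (M.pos i).real {t} - (M.neg i).real {t} = φ t i - Lφ i := by
  obtain ⟨u, hmono, hu_mem, hu⟩ := exists_seq_strictMono_tendsto' ht
  have hu0 : ∀ n, 0 ≤ u n := fun n => (hu_mem n).1.le
  have hut : ∀ n, u n < t := fun n => (hu_mem n).2
  have hmeasure : ∀ μ : Measure ℝ, μ (Ioc (u 0) t) ≠ ⊤ →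
      Tendsto (fun n => μ.real (Ioc (u n) t)) atTop (𝓝 (μ.real {t})) := fun μ hμ => by
    simpa using tendsto_setIntegral_Ioc_of_tendsto_left (f := fun _ => (1 : ℝ))
      hmono.monotone hut hu (integrableOn_const hμ)
  have hincr : Tendsto (fun n => φ t i - φ (u n) i) atTop (𝓝 (φ t i - Lφ i)) :=
    tendsto_const_nhds.sub (((EuclideanSpace.proj i).continuous.tendsto Lφ).comp
      (hφ.comp (tendsto_nhdsWithin_iff.2 ⟨hu, .of_forall hut⟩)))
  refine tendsto_nhds_unique ((hmeasure _ (M.pos_Ioc_ne_top (hu0 0) i t)).sub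
    (hmeasure _ (M.neg_Ioc_ne_top (hu0 0) i t))) (hincr.congr fun n => ?_)
  exact (M.increments i (u n) t (hu0 n) (hut n).le).symm

theorem tendsto_pairing_of_tendsto_left {f : ℝ → Euc d} {u : ℕ → ℝ} {t C : ℝ} {Lφ : Euc d}
    (hu0 : 0 ≤ u 0) (hmono : Monotone u) (hut : ∀ n, u n < t) (hu : Tendsto u atTop (𝓝 t))
    (hf : Measurable f) (hC : ∀ τ ∈ Ioc (u 0) t, ‖f τ‖ ≤ C) (hφ : Tendsto φ (𝓝[<] t) (𝓝 Lφ)) :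
    Tendsto (fun n => M.pairing f (u n) t) atTop (𝓝 ⟪f t, φ t - Lφ⟫) := by
  have hint : ∀ μ : Measure ℝ, μ (Ioc (u 0) t) ≠ ⊤ → ∀ i : Fin d,
      Tendsto (fun n => ∫ τ in Ioc (u n) t, f τ i ∂μ) atTop (𝓝 (μ.real {t} * f t i)) :=
    fun μ hμ i => tendsto_setIntegral_Ioc_of_tendsto_left hmono hut hu <|
      Measure.integrableOn_of_bounded hμ
        ((EuclideanSpace.proj i).continuous.measurable.comp hf).aestronglyMeasurable
        ((ae_restrict_iff' measurableSet_Ioc).2 <| .of_forall fun τ hτ =>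
          (PiLp.norm_apply_le (f τ) i).trans (hC τ hτ))
  have hlim := tendsto_finsetSum Finset.univ fun i _ =>
    (hint _ (M.pos_Ioc_ne_top hu0 i t) i).sub (hint _ (M.neg_Ioc_ne_top hu0 i t) i)
  have hjump : ⟪f t, φ t - Lφ⟫
      = ∑ i, ((M.pos i).real {t} * f t i - (M.neg i).real {t} * f t i) := by
    simp only [PiLp.inner_apply, ← sub_mul,
      M.real_singleton_sub_of_tendsto_left (hu0.trans_lt (hut 0)) hφ]
    exact Finset.sum_congr rfl fun i _ => by simp
  exact hjump ▸ hlim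

end BVMeasureData

namespace IsSkorohodSolution

variable {d : ℕ} {D : Set (Euc d)} {w X φ : ℝ → Euc d} {M : BVMeasureData d φ}

theorem sub_leftLim_eq (hsol : IsSkorohodSolution D w X φ M) (hw : ContinuousOn w (Ici 0))
    {t : ℝ} (ht : 0 < t) {L Lφ : Euc d} (hL : Tendsto X (𝓝[<] t) (𝓝 L))
    (hLφ : Tendsto φ (𝓝[<] t) (𝓝 Lφ)) : X t - L = φ t - Lφ := by
  have hpos : Ioo 0 t ∈ 𝓝[<] t := Ioo_mem_nhdsLT ht
  have hwt : Tendsto w (𝓝[<] t) (𝓝 (w t)) :=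
    (hw t ht.le).mono_left (nhdsWithin_le_of_mem (mem_of_superset hpos fun _ h => h.1.le))
  have hL_eq : L = w t + Lφ := tendsto_nhds_unique hL <| (hwt.add hLφ).congr' <| by
    filter_upwards [hpos] with τ hτ using (hsol.eqn τ hτ.1.le).symm
  rw [hsol.eqn t ht.le, hL_eq]
  abel

theorem tendsto_nhdsLT (hsol : IsSkorohodSolution D w X φ M) (hw : ContinuousOn w (Ici 0))
    {t : ℝ} (ht : 0 < t) : Tendsto X (𝓝[<] t) (𝓝 (X t)) := by
  obtain ⟨L, hL⟩ := hsol.leftLim t ht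
  obtain ⟨Lφ, hLφ⟩ := hsol.assoc.leftLim t ht
  suffices X t = L by rwa [this]
  obtain ⟨a, (hat : a < t), ha⟩ := mem_nhdsLT_iff_exists_Ioo_subset.1 <|
    inter_mem (Ioo_mem_nhdsLT ht) (Metric.tendsto_nhds.1 hL 1 one_pos)
  obtain ⟨u, hmono, hu_mem, hu⟩ := exists_seq_strictMono_tendsto' hat
  have hLmem : L ∈ closure D := isClosed_closure.mem_of_tendsto hL <| by
    filter_upwards [Ioo_mem_nhdsLT ht] with τ hτ using hsol.mem τ hτ.1.le
  set g : ℝ → Euc d := fun τ => L - X (max τ 0)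
  have hg : ∀ n, EqOn (fun τ => L - X τ) g (Ioc (u n) t) := fun n τ hτ => by
    simp only [g, max_eq_left ((ha (hu_mem n)).1.1.trans hτ.1).le]
  have hbound : ∀ τ ∈ Ioc (u 0) t, ‖g τ‖ ≤ max 1 ‖L - X t‖ := by
    intro τ hτ
    rw [← hg 0 hτ]
    rcases hτ.2.eq_or_lt with rfl | hτt
    · exact le_max_right _ _
    · rw [← dist_eq_norm, dist_comm]
      exact (ha ⟨(hu_mem 0).1.trans hτ.1, hτt⟩).2.le.trans (le_max_left _ _)
  have hlim : Tendsto (fun n => M.pairing g (u n) t) atTop (𝓝 ⟪g t, φ t - Lφ⟫) :=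
    M.tendsto_pairing_of_tendsto_left (ha (hu_mem 0)).1.1.le hmono.monotone (fun n => (hu_mem n).2)
      hu (measurable_const.sub hsol.rightCont.measurable_comp_max) hbound hLφ
  have hnonneg : ∀ n, 0 ≤ M.pairing g (u n) t := fun n => by
    rw [← M.pairing_congr (hg n)]
    exact hsol.assoc.normal (fun _ => L) continuous_const (fun _ _ => hLmem) _ _
      (ha (hu_mem n)).1.1.le (hu_mem n).2.le
  have hsq := ge_of_tendsto' hlim hnonneg
  rw [show g t = -(X t - L) by simp [g, max_eq_left ht.le], ← hsol.sub_leftLim_eq hw ht hL hLφ,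
    inner_neg_left, real_inner_self_eq_norm_sq, neg_nonneg] at hsq
  simpa [sub_eq_zero] using hsq

end IsSkorohodSolution

theorem skorohod_solution_continuous_general {d : ℕ} (D : Set (Euc d))
    (w : ℝ → Euc d) (hw : ContinuousOn w (Ici 0))
    (X φ : ℝ → Euc d) (M : BVMeasureData d φ)
    (hsol : IsSkorohodSolution D w X φ M) :
    ContinuousOn X (Ici 0) ∧ ContinuousOn φ (Ici 0) := by
  have hX : ContinuousOn X (Ici 0) := fun t ht => by
    rcases (mem_Ici.1 ht).eq_or_lt with rfl | ht
    · exact hsol.rightCont 0 le_rfl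
    · refine ContinuousAt.continuousWithinAt ?_
      rw [ContinuousAt, ← nhdsLT_sup_nhdsGE, tendsto_sup]
      exact ⟨hsol.tendsto_nhdsLT hw ht, hsol.rightCont t ht.le⟩
  refine ⟨hX, (hX.sub hw).congr fun t ht => ?_⟩
  simp [hsol.eqn t ht]

/-- **Lemma 4.1.4.** If `w : [0,∞) → ℝ^d` is continuous with `w(0) ∈ closure D` and `(X, φ)`
solves the Skorohod equation `X = w + φ` for a nonempty convex open `D ⊆ ℝ^d`, then `X`
(and hence `φ`) is continuous on `[0,∞)`. -/
theorem skorohod_solution_continuous {d : ℕ} (D : Set (Euc d)) (hne : D.Nonempty)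
    (hconv : Convex ℝ D) (hopen : IsOpen D)
    (w : ℝ → Euc d) (hw : ContinuousOn w (Ici 0)) (hw0 : w 0 ∈ closure D)
    (X φ : ℝ → Euc d) (M : BVMeasureData d φ)
    (hsol : IsSkorohodSolution D w X φ M) :
    ContinuousOn X (Ici 0) ∧ ContinuousOn φ (Ici 0) :=
  skorohod_solution_continuous_general D w hw X φ M hsol
end
end
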